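/- arXiv:1611.02188 — 7 statements merged into one kernel-verified Lean document; each statement's English description precedes it below -/
import Mathlib

section
/- Let X be a Fréchet space whose topology is generated by an increasing sequence (p_k)_{k∈ℕ} of continuous seminorms, and let f, F : [0,1] → X. If f is integrable by seminorms with primitive F (that is, F(v) − F(u) = ∫_{[u,v]} f dλ for every closed subinterval [u,v] ⊆ [0,1]), then for almost every t ∈ [0,1]: F has the limit average range at t, p_k-diam(A_F(t)) = 0 for every k ∈ ℕ, and A_F(t) = {f(t)}. -/
open MeasureTheory Set Filter Topology ENNReal

noncomputable section

variable {X : Type*}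

/-- The difference quotient `ΔF(t,h) = (F(t+h) − F(t))/h`. -/
def diffQuot [AddCommGroup X] [Module ℝ X] (F : ℝ → X) (t h : ℝ) : X :=
  h⁻¹ • (F (t + h) - F t)

/-- `A_F(t,δ) = {ΔF(t,h) : 0 < |h| < δ, t + h ∈ [0,1]}`. -/
def avgSet [AddCommGroup X] [Module ℝ X] (F : ℝ → X) (t δ : ℝ) : Set X :=
  {x | ∃ h : ℝ, h ≠ 0 ∧ |h| < δ ∧ t + h ∈ Icc (0:ℝ) 1 ∧ x = diffQuot F t h}

/-- Closure of a set with respect to the pseudometric `(x,y) ↦ p (x - y)`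
induced by a seminorm `p`. -/
def pClosure [AddCommGroup X] [Module ℝ X] (p : Seminorm ℝ X) (S : Set X) : Set X :=
  {x | ∀ ε : ℝ, 0 < ε → ∃ y ∈ S, p (x - y) < ε}

/-- `A_F^{(p)}(t) = ⋂_{δ>0} cl_p (A_F(t,δ))`. -/
def avgRangeP [AddCommGroup X] [Module ℝ X] (p : Seminorm ℝ X) (F : ℝ → X) (t : ℝ) : Set X :=
  ⋂ δ > (0:ℝ), pClosure p (avgSet F t δ)

/-- The average range `A_F(t) = ⋂_{p ∈ 𝒫} A_F^{(p)}(t)`, the intersection taken over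
all continuous seminorms on `X`. -/
def avgRange [AddCommGroup X] [Module ℝ X] [TopologicalSpace X] (F : ℝ → X) (t : ℝ) : Set X :=
  ⋂ p ∈ {p : Seminorm ℝ X | Continuous p}, avgRangeP p F t

/-- `p`-diameter of a set: `sup {p (x - y) : x, y ∈ W}` (valued in `ℝ≥0∞`,
so that `pDiam p ∅ = 0` and unbounded sets get diameter `∞`). -/
def pDiam [AddCommGroup X] [Module ℝ X] (p : Seminorm ℝ X) (W : Set X) : ℝ≥0∞ :=
  ⨆ x ∈ W, ⨆ y ∈ W, ENNReal.ofReal (p (x - y))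

/-- `F` has the limit average range at `t`: `A_F(t)` is bounded and for every `ε > 0`
and continuous seminorm `p` there is `δ > 0` with
`p-diam(A_F(t,δ)) < p-diam(A_F(t)) + ε`. -/
def HasLimitAvgRange [AddCommGroup X] [Module ℝ X] [TopologicalSpace X]
    (F : ℝ → X) (t : ℝ) : Prop :=
  Bornology.IsVonNBounded ℝ (avgRange F t) ∧
    ∀ p : Seminorm ℝ X, Continuous p → ∀ ε : ℝ, 0 < ε →
      ∃ δ > (0:ℝ), pDiam p (avgSet F t δ) < pDiam p (avgRange F t) + ENNReal.ofReal ε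

/-- `F` is strongly absolutely continuous on `[0,1]`. -/
def StronglyAC [AddCommGroup X] [Module ℝ X] [TopologicalSpace X] (F : ℝ → X) : Prop :=
  ∀ p : Seminorm ℝ X, Continuous p → ∀ ε : ℝ, 0 < ε → ∃ η > (0:ℝ),
    ∀ (n : ℕ) (u v : Fin n → ℝ),
      (∀ j, 0 ≤ u j ∧ u j < v j ∧ v j ≤ 1) →
      (∀ i j, i ≠ j → v i ≤ u j ∨ v j ≤ u i) →
      (∑ j, (v j - u j)) < η →
      (∑ j, p (F (v j) - F (u j))) < ε

/-- A (Lebesgue) measurable simple function: finitely many values, each attained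
on a measurable set. -/
def IsSimple (g : ℝ → X) : Prop :=
  (Set.range g).Finite ∧ ∀ x : X, MeasurableSet (g ⁻¹' {x})

open Classical in
/-- The integral `∫_E g dλ` of a simple function `g` over `E` (junk value `0` if `g`
is not simple). -/
def simpleIntegral [AddCommGroup X] [Module ℝ X] (g : ℝ → X) (E : Set ℝ) : X :=
  if h : (Set.range g).Finite then
    ∑ x ∈ h.toFinset, (volume (E ∩ g ⁻¹' {x})).toReal • x
  else 0

/-- `f` is integrable by seminorms on `[0,1]` with integral `ν E = ∫_E f dλ` for
measurable `E ⊆ [0,1]`. -/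
def HasIntegralBySeminorms [AddCommGroup X] [Module ℝ X] [TopologicalSpace X]
    (f : ℝ → X) (ν : Set ℝ → X) : Prop :=
  ∀ p : Seminorm ℝ X, Continuous p →
    ∃ fk : ℕ → ℝ → X, (∀ k, IsSimple (fk k)) ∧
      (∃ Z : Set ℝ, volume Z = 0 ∧ ∀ t ∈ Icc (0:ℝ) 1, t ∉ Z →
        Tendsto (fun k => p (fk k t - f t)) atTop (𝓝 0)) ∧
      (∀ k, IntegrableOn (fun t => p (fk k t - f t)) (Icc (0:ℝ) 1) volume) ∧
      Tendsto (fun k => ∫ t in Icc (0:ℝ) 1, p (fk k t - f t)) atTop (𝓝 0) ∧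
      (∀ E : Set ℝ, MeasurableSet E → E ⊆ Icc (0:ℝ) 1 →
        Tendsto (fun k => p (simpleIntegral (fk k) E - ν E)) atTop (𝓝 0))

/-- The filter of increments `h → 0`, `h ≠ 0`, `t + h ∈ [0,1]`. -/
def dqFilter (t : ℝ) : Filter ℝ :=
  𝓝[{h : ℝ | h ≠ 0 ∧ t + h ∈ Icc (0:ℝ) 1}] 0

variable {Y : Type*}

/-- Average range for a normed-space valued function:
`A_G(t) = ⋂_{δ>0} closure (A_G(t,δ))`, closure in the norm topology. -/
def avgRangeN [NormedAddCommGroup Y] [NormedSpace ℝ Y] (G : ℝ → Y) (t : ℝ) : Set Y :=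
  ⋂ δ > (0:ℝ), closure (avgSet G t δ)

/-- Limit average range for a normed-space valued function. -/
def HasLimitAvgRangeN [NormedAddCommGroup Y] [NormedSpace ℝ Y] (G : ℝ → Y) (t : ℝ) : Prop :=
  Bornology.IsBounded (avgRangeN G t) ∧
    ∀ ε : ℝ, 0 < ε → ∃ δ > (0:ℝ),
      EMetric.diam (avgSet G t δ) < EMetric.diam (avgRangeN G t) + ENNReal.ofReal ε

/-- Strong absolute continuity for a normed-space valued function. -/
def StronglyACN [NormedAddCommGroup Y] (g : ℝ → Y) : Prop :=
  ∀ ε : ℝ, 0 < ε → ∃ η > (0:ℝ),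
    ∀ (n : ℕ) (u v : Fin n → ℝ),
      (∀ j, 0 ≤ u j ∧ u j < v j ∧ v j ≤ 1) →
      (∀ i j, i ≠ j → v i ≤ u j ∨ v j ≤ u i) →
      (∑ j, (v j - u j)) < η →
      (∑ j, ‖g (v j) - g (u j)‖) < ε

section SimpleLemmas
set_option linter.unusedSectionVars false

lemma indicator_const_integrableOn {A E : Set ℝ} (hA : MeasurableSet A)
    (hE : MeasurableSet E) (hfin : volume E ≠ ⊤) (r : ℝ) :
    MeasureTheory.IntegrableOn (A.indicator (fun _ => r)) E := by
  rw [MeasureTheory.IntegrableOn, MeasureTheory.integrable_indicator_iff hA]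
  refine (MeasureTheory.integrableOn_const_iff).2 (Or.inr ?_)
  rw [MeasureTheory.Measure.restrict_apply' hE]
  exact lt_of_le_of_lt (MeasureTheory.measure_mono Set.inter_subset_right) hfin.lt_top

variable {X : Type*} [AddCommGroup X] [Module ℝ X]

lemma seminorm_sum_le {ι : Type*} (q : Seminorm ℝ X) (s : Finset ι) (v : ι → X) :
    q (∑ i ∈ s, v i) ≤ ∑ i ∈ s, q (v i) := by
  classical
  induction s using Finset.induction with
  | empty => simp
  | insert _ _ hns ih =>
    rw [Finset.sum_insert hns, Finset.sum_insert hns]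
    exact (map_add_le_add q _ _).trans (by gcongr)

lemma IsSimple.comp_eq_sum {g : ℝ → X} (hg : IsSimple g) (φ : X → ℝ) (s : ℝ) :
    φ (g s) = ∑ x ∈ hg.1.toFinset, (g ⁻¹' {x}).indicator (fun _ => φ x) s := by
  classical
  rw [Finset.sum_eq_single (g s)]
  · simp [Set.indicator_of_mem, Set.mem_preimage]
  · intro x _ hne
    apply Set.indicator_of_notMem
    simp only [Set.mem_preimage, Set.mem_singleton_iff]
    exact fun h => hne h.symm
  · intro h
    exact absurd (by simp [hg.1.mem_toFinset, Set.mem_range_self]) h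

lemma IsSimple.measurable_comp {g : ℝ → X} (hg : IsSimple g) (φ : X → ℝ) :
    Measurable (fun s => φ (g s)) := by
  have : (fun s => φ (g s)) =
      fun s => ∑ x ∈ hg.1.toFinset, (g ⁻¹' {x}).indicator (fun _ => φ x) s := by
    funext s; exact hg.comp_eq_sum φ s
  rw [this]
  exact Finset.measurable_sum _ fun x _ => (measurable_const).indicator (hg.2 x)

lemma IsSimple.integrableOn_comp {g : ℝ → X} (hg : IsSimple g) (φ : X → ℝ)
    {E : Set ℝ} (hE : MeasurableSet E) (hfin : volume E ≠ ⊤) :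
    IntegrableOn (fun s => φ (g s)) E := by
  have : (fun s => φ (g s)) =
      fun s => ∑ x ∈ hg.1.toFinset, (g ⁻¹' {x}).indicator (fun _ => φ x) s := by
    funext s; exact hg.comp_eq_sum φ s
  rw [this]
  apply MeasureTheory.integrable_finset_sum
  intro x _
  exact indicator_const_integrableOn (hg.2 x) hE hfin _

lemma IsSimple.setIntegral_comp {g : ℝ → X} (hg : IsSimple g) (φ : X → ℝ)
    {E : Set ℝ} (hE : MeasurableSet E) (hfin : volume E ≠ ⊤) :
    ∫ s in E, φ (g s) = ∑ x ∈ hg.1.toFinset, (volume (E ∩ g ⁻¹' {x})).toReal * φ x := by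
  have h1 : ∫ s in E, φ (g s) =
      ∫ s in E, ∑ x ∈ hg.1.toFinset, (g ⁻¹' {x}).indicator (fun _ => φ x) s := by
    congr 1; funext s; exact hg.comp_eq_sum φ s
  rw [h1, MeasureTheory.integral_finset_sum]
  · refine Finset.sum_congr rfl fun x _ => ?_
    rw [MeasureTheory.setIntegral_indicator (hg.2 x), MeasureTheory.setIntegral_const]
    simp [mul_comm]
    exact Or.inl rfl
  · intro x _
    exact indicator_const_integrableOn (hg.2 x) hE hfin _

lemma IsSimple.measure_partition {g : ℝ → X} (hg : IsSimple g)
    {E : Set ℝ} (hE : MeasurableSet E) :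
    ∑ x ∈ hg.1.toFinset, volume (E ∩ g ⁻¹' {x}) = volume E := by
  classical
  rw [← MeasureTheory.measure_biUnion_finset]
  · congr 1
    ext s
    simp only [Set.mem_iUnion, Set.mem_inter_iff, Set.mem_preimage, Set.mem_singleton_iff]
    constructor
    · rintro ⟨x, _, hsE, _⟩; exact hsE
    · intro hsE; exact ⟨g s, by simp [hg.1.mem_toFinset], hsE, rfl⟩
  · intro x _ y _ hxy
    apply Set.disjoint_left.2
    rintro s ⟨_, hsx⟩ ⟨_, hsy⟩
    exact hxy (hsx.symm.trans hsy)
  · intro x _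
    exact hE.inter (hg.2 x)

lemma simpleIntegral_sub_smul_le (q : Seminorm ℝ X) {g : ℝ → X} (hg : IsSimple g) (c : X)
    {E : Set ℝ} (hE : MeasurableSet E) (hfin : volume E ≠ ⊤) :
    q (simpleIntegral g E - (volume E).toReal • c) ≤ ∫ s in E, q (g s - c) := by
  classical
  have hfin' : ∀ x : X, volume (E ∩ g ⁻¹' {x}) ≠ ⊤ :=
    fun x => (lt_of_le_of_lt (MeasureTheory.measure_mono Set.inter_subset_left) hfin.lt_top).ne
  have hvol : (volume E).toReal = ∑ x ∈ hg.1.toFinset, (volume (E ∩ g ⁻¹' {x})).toReal := by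
    rw [← ENNReal.toReal_sum (fun x _ => hfin' x), hg.measure_partition hE]
  rw [simpleIntegral, dif_pos hg.1, hvol, Finset.sum_smul, ← Finset.sum_sub_distrib]
  have heq : ∀ x ∈ hg.1.toFinset,
      (volume (E ∩ g ⁻¹' {x})).toReal • x - (volume (E ∩ g ⁻¹' {x})).toReal • c
        = (volume (E ∩ g ⁻¹' {x})).toReal • (x - c) := fun x _ => (smul_sub _ _ _).symm
  rw [Finset.sum_congr rfl heq, hg.setIntegral_comp (fun x => q (x - c)) hE hfin]
  refine (seminorm_sum_le q _ _).trans ?_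
  refine Finset.sum_le_sum fun x _ => ?_
  rw [map_smul_eq_mul]
  simp [abs_of_nonneg ENNReal.toReal_nonneg]

end SimpleLemmas
section Key
set_option linter.unusedSectionVars false
set_option maxHeartbeats 1000000

variable {X : Type*} [AddCommGroup X] [Module ℝ X] [TopologicalSpace X]

lemma key_tendsto (q : Seminorm ℝ X) (hq : Continuous q) (f F : ℝ → X) (ν : Set ℝ → X)
    (hint : HasIntegralBySeminorms f ν)
    (hprim : ∀ u v : ℝ, 0 ≤ u → u < v → v ≤ 1 → F v - F u = ν (Icc u v)) :
    ∀ᵐ t ∂(volume : Measure ℝ), t ∈ Icc (0:ℝ) 1 →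
      Tendsto (fun h => q (diffQuot F t h - f t)) (dqFilter t) (𝓝 0) := by
  classical
  obtain ⟨fk, hfk, ⟨Z, hZ0, hZ⟩, hfkint, hfktend, hfkset⟩ := hint q hq
  have hIcc : MeasurableSet (Icc (0:ℝ) 1) := measurableSet_Icc
  have hIccfin : volume (Icc (0:ℝ) 1) ≠ ⊤ := by simp
  have hfin' : ∀ (E : Set ℝ), E ⊆ Icc (0:ℝ) 1 → volume E ≠ ⊤ := fun E hE =>
    (lt_of_le_of_lt (measure_mono hE) hIccfin.lt_top).ne
  -- measurability of s ↦ q (f s - c)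
  have hmeasc : ∀ c : X, AEStronglyMeasurable (fun s => q (f s - c))
      (volume.restrict (Icc (0:ℝ) 1)) := by
    intro c
    apply aestronglyMeasurable_of_tendsto_ae atTop
      (f := fun j s => q (fk j s - c))
      (fun j => ((hfk j).measurable_comp (fun x => q (x - c))).aestronglyMeasurable)
    rw [ae_restrict_iff' hIcc]
    filter_upwards [measure_eq_zero_iff_ae_notMem.mp hZ0] with t htZ htIcc
    have h0 := hZ t htIcc htZ
    have hb : ∀ j, ‖q (fk j t - c) - q (f t - c)‖ ≤ q (fk j t - f t) := by
      intro j
      have := q.norm_sub_map_le_sub (fk j t - c) (f t - c)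
      rwa [sub_sub_sub_cancel_right] at this
    have := (squeeze_zero_norm hb h0).add_const (q (f t - c))
    simpa using this
  -- integrability of s ↦ q (f s - c)
  have hintc : ∀ c : X, IntegrableOn (fun s => q (f s - c)) (Icc (0:ℝ) 1) := by
    intro c
    apply MeasureTheory.Integrable.mono'
      ((hfkint 0).add (((hfk 0).integrableOn_comp (fun x => q (x - c)) hIcc hIccfin)))
      (hmeasc c)
    refine Filter.Eventually.of_forall fun s => ?_
    rw [Real.norm_eq_abs, abs_of_nonneg (apply_nonneg q _)]
    calc q (f s - c) = q ((f s - fk 0 s) + (fk 0 s - c)) := by rw [sub_add_sub_cancel]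
      _ ≤ q (f s - fk 0 s) + q (fk 0 s - c) := map_add_le_add q _ _
      _ = q (fk 0 s - f s) + q (fk 0 s - c) := by rw [map_sub_rev]
  -- key estimate
  have hkey : ∀ (E : Set ℝ), MeasurableSet E → E ⊆ Icc (0:ℝ) 1 → ∀ c : X,
      q (ν E - (volume E).toReal • c) ≤ ∫ s in E, q (f s - c) := by
    intro E hE hEsub c
    have hEfin := hfin' E hEsub
    have htd : Tendsto (fun j => q (simpleIntegral (fk j) E - ν E) +
        ((∫ s in Icc (0:ℝ) 1, q (fk j s - f s)) + ∫ s in E, q (f s - c))) atTop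
        (𝓝 (0 + (0 + ∫ s in E, q (f s - c)))) :=
      (hfkset E hE hEsub).add (hfktend.add_const _)
    rw [zero_add, zero_add] at htd
    refine ge_of_tendsto htd (Filter.Eventually.of_forall fun j => ?_)
    have t1 : q (ν E - (volume E).toReal • c) ≤ q (ν E - simpleIntegral (fk j) E) +
        q (simpleIntegral (fk j) E - (volume E).toReal • c) := by
      rw [← sub_add_sub_cancel (ν E) (simpleIntegral (fk j) E) ((volume E).toReal • c)]
      exact map_add_le_add q _ _
    have t2 : q (ν E - simpleIntegral (fk j) E) = q (simpleIntegral (fk j) E - ν E) :=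
      map_sub_rev q _ _
    have t3 : q (simpleIntegral (fk j) E - (volume E).toReal • c) ≤
        ∫ s in E, q (fk j s - c) :=
      simpleIntegral_sub_smul_le q (hfk j) c hE hEfin
    have hi1 : IntegrableOn (fun s => q (fk j s - c)) E :=
      (hfk j).integrableOn_comp (fun x => q (x - c)) hE hEfin
    have hi2 : IntegrableOn (fun s => q (fk j s - f s)) E := (hfkint j).mono_set hEsub
    have hi3 : IntegrableOn (fun s => q (f s - c)) E := (hintc c).mono_set hEsub
    have t4 : ∫ s in E, q (fk j s - c) ≤
        (∫ s in E, q (fk j s - f s)) + ∫ s in E, q (f s - c) := by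
      rw [← MeasureTheory.integral_add hi2 hi3]
      refine MeasureTheory.integral_mono hi1 (hi2.add hi3) fun s => ?_
      calc q (fk j s - c) = q ((fk j s - f s) + (f s - c)) := by rw [sub_add_sub_cancel]
        _ ≤ q (fk j s - f s) + q (f s - c) := map_add_le_add q _ _
    have t5 : ∫ s in E, q (fk j s - f s) ≤ ∫ s in Icc (0:ℝ) 1, q (fk j s - f s) :=
      setIntegral_mono_set (hfkint j)
        (Filter.Eventually.of_forall fun s => apply_nonneg q _)
        (HasSubset.Subset.eventuallyLE hEsub)
    linarith
  -- countable dense-ish set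
  set D : Set X := ⋃ j, Set.range (fk j) with hD
  have hDc : D.Countable := Set.countable_iUnion fun j => (hfk j).1.countable
  set g : X → ℝ → ℝ := fun c => (Icc (0:ℝ) 1).indicator (fun s => q (f s - c)) with hg
  have hgint : ∀ c, Integrable (g c) volume := by
    intro c
    rw [hg]
    simpa [MeasureTheory.integrable_indicator_iff hIcc] using hintc c
  -- Lebesgue differentiation
  have h1 : ∀ᵐ t ∂(volume : Measure ℝ), ∀ c ∈ D,
      Tendsto (fun h : ℝ => ⨍ y in Metric.closedBall t |h|, ‖g c y - g c t‖)
        (dqFilter t) (𝓝 0) := by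
    rw [MeasureTheory.ae_ball_iff hDc]
    intro c _
    filter_upwards [IsUnifLocDoublingMeasure.ae_tendsto_average_norm_sub
      (volume : Measure ℝ) ((hgint c).locallyIntegrable) 1] with t ht
    refine ht (l := dqFilter t) (fun _ => t) (fun h => |h|) ?_ ?_
    · rw [tendsto_nhdsWithin_iff]
      refine ⟨(continuous_abs.tendsto' 0 0 abs_zero).mono_left nhdsWithin_le_nhds, ?_⟩
      filter_upwards [self_mem_nhdsWithin] with h hh
      exact abs_pos.mpr hh.1
    · refine Filter.Eventually.of_forall fun h => ?_
      exact Metric.mem_closedBall_self (by positivity)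
  -- unified difference quotient formula
  have hdq : ∀ t h : ℝ, h ≠ 0 → diffQuot F t h =
      |h|⁻¹ • (F (max t (t + h)) - F (min t (t + h))) := by
    intro t h hne
    rcases lt_or_gt_of_ne hne with hneg | hpos
    · have h1' : max t (t + h) = t := max_eq_left (by linarith)
      have h2' : min t (t + h) = t + h := min_eq_right (by linarith)
      rw [h1', h2', diffQuot, abs_of_neg hneg, inv_neg, neg_smul, ← smul_neg, neg_sub]
    · have h1' : max t (t + h) = t + h := max_eq_right (by linarith)
      have h2' : min t (t + h) = t := min_eq_left (by linarith)
      rw [h1', h2', diffQuot, abs_of_pos hpos]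
  -- main argument
  filter_upwards [h1, measure_eq_zero_iff_ae_notMem.mp hZ0] with t ht1 htZ htIcc
  rw [Metric.tendsto_nhds]
  intro ε hε
  have happrox : ∃ c ∈ D, q (f t - c) < ε / 8 := by
    obtain ⟨j, hj⟩ := ((hZ t htIcc htZ).eventually
      (gt_mem_nhds (by positivity : (0:ℝ) < ε / 8))).exists
    exact ⟨fk j t, Set.mem_iUnion.2 ⟨j, Set.mem_range_self t⟩, by
      rwa [map_sub_rev] at hj⟩
  obtain ⟨c, hcD, hc⟩ := happrox
  have hev1 : ∀ᶠ h in dqFilter t,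
      ⨍ y in Metric.closedBall t |h|, ‖g c y - g c t‖ < ε / 8 :=
    (ht1 c hcD).eventually (gt_mem_nhds (by positivity))
  filter_upwards [hev1, self_mem_nhdsWithin] with h hA hs
  obtain ⟨hne, hmem⟩ := hs
  set m := |h| with hm
  have hm0 : 0 < m := abs_pos.mpr hne
  set a := min t (t + h) with ha
  set b := max t (t + h) with hb
  have hab : a < b := min_lt_max.mpr (fun hcontra => hne (by linarith))
  have ha0 : 0 ≤ a := le_min htIcc.1 hmem.1
  have hb1 : b ≤ 1 := max_le htIcc.2 hmem.2
  have hba : b - a = m := by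
    rw [hb, ha, max_sub_min_eq_abs, hm]
    congr 1
    ring
  have hIsub : Icc a b ⊆ Icc (0:ℝ) 1 := fun s hsi => ⟨ha0.trans hsi.1, hsi.2.trans hb1⟩
  have hνI : F b - F a = ν (Icc a b) := hprim a b ha0 hab hb1
  have hvolI : (volume (Icc a b)).toReal = m := by
    rw [Real.volume_Icc, ENNReal.toReal_ofReal (by linarith)]
    linarith
  have hid : q (diffQuot F t h - f t) = m⁻¹ * q (ν (Icc a b) - m • f t) := by
    have hd : diffQuot F t h - f t = m⁻¹ • (ν (Icc a b) - m • f t) := by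
      rw [hdq t h hne, ← hb, ← ha, hνI, smul_sub, smul_smul,
        inv_mul_cancel₀ hm0.ne', one_smul]
    rw [hd, map_smul_eq_mul, Real.norm_eq_abs, abs_inv, hm, abs_abs]
  have e1 : q (ν (Icc a b) - m • f t) ≤ q (ν (Icc a b) - m • c) + m * q (c - f t) := by
    have hd : ν (Icc a b) - m • f t = (ν (Icc a b) - m • c) + m • (c - f t) := by
      rw [smul_sub]; abel
    rw [hd]
    refine (map_add_le_add q _ _).trans ?_
    rw [map_smul_eq_mul, Real.norm_eq_abs, hm, abs_abs]
  have e2 : q (ν (Icc a b) - m • c) ≤ ∫ s in Icc a b, q (f s - c) := by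
    have := hkey (Icc a b) measurableSet_Icc hIsub c
    rwa [hvolI] at this
  have e3 : ∫ s in Icc a b, q (f s - c) = ∫ s in Icc a b, g c s := by
    refine MeasureTheory.setIntegral_congr_fun measurableSet_Icc fun s hsi => ?_
    simp only [hg]
    exact (Set.indicator_of_mem (hIsub hsi) (fun s => q (f s - c))).symm
  have hconstint : IntegrableOn (fun _ : ℝ => g c t) (Icc a b) :=
    (MeasureTheory.integrableOn_const_iff).2 (Or.inr (by
      rw [Real.volume_Icc]; exact ENNReal.ofReal_lt_top))
  have hi1 : IntegrableOn (g c) (Icc a b) := (hgint c).integrableOn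
  have hnormint : IntegrableOn (fun s => ‖g c s - g c t‖) (Icc a b) :=
    (hi1.sub hconstint).norm
  have e4 : ∫ s in Icc a b, g c s ≤ (∫ s in Icc a b, ‖g c s - g c t‖) + m * g c t := by
    calc ∫ s in Icc a b, g c s ≤ ∫ s in Icc a b, (‖g c s - g c t‖ + g c t) := by
          refine MeasureTheory.integral_mono hi1 (hnormint.add hconstint) fun s => ?_
          have : g c s - g c t ≤ ‖g c s - g c t‖ := le_abs_self _
          linarith
      _ = (∫ s in Icc a b, ‖g c s - g c t‖) + m * g c t := by
          rw [MeasureTheory.integral_add hnormint hconstint,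
            MeasureTheory.setIntegral_const, measureReal_def, hvolI, smul_eq_mul]
  have e5 : ∫ s in Icc a b, ‖g c s - g c t‖ ≤
      ∫ s in Metric.closedBall t m, ‖g c s - g c t‖ := by
    have hconst2 : IntegrableOn (fun _ : ℝ => g c t) (Metric.closedBall t m) :=
      (MeasureTheory.integrableOn_const_iff).2 (Or.inr (by
        rw [Real.volume_closedBall]; exact ENNReal.ofReal_lt_top))
    refine setIntegral_mono_set (((hgint c).integrableOn.sub hconst2).norm)
      (Filter.Eventually.of_forall fun s => norm_nonneg _)
      (HasSubset.Subset.eventuallyLE ?_)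
    rw [Real.closedBall_eq_Icc]
    refine Icc_subset_Icc ?_ ?_
    · exact le_min (by linarith) (by have := neg_abs_le h; rw [← hm] at this; linarith)
    · exact max_le (by linarith) (by have := le_abs_self h; rw [← hm] at this; linarith)
  have e6 : ∫ s in Metric.closedBall t m, ‖g c s - g c t‖ =
      (2 * m) * ⨍ y in Metric.closedBall t m, ‖g c y - g c t‖ := by
    rw [MeasureTheory.setAverage_eq, measureReal_def, Real.volume_closedBall,
      ENNReal.toReal_ofReal (by positivity), smul_eq_mul]
    field_simp
  have hgct : g c t = q (f t - c) := by
    simp only [hg]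
    exact Set.indicator_of_mem htIcc (fun s => q (f s - c))
  have hq2 : q (c - f t) = q (f t - c) := map_sub_rev q c (f t)
  rw [Real.dist_eq, sub_zero, abs_of_nonneg (apply_nonneg q _), hid]
  have havg : ⨍ y in Metric.closedBall t m, ‖g c y - g c t‖ < ε / 8 := hA
  have hbound : q (ν (Icc a b) - m • f t) < m * ε := by
    have h2 : (2 : ℝ) * m * (ε / 8) ≥ 0 := by positivity
    nlinarith [e1, e2, e3, e4, e5, e6, havg, hc, hgct, hq2, hm0]
  calc m⁻¹ * q (ν (Icc a b) - m • f t) < m⁻¹ * (m * ε) := by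
        exact mul_lt_mul_of_pos_left hbound (inv_pos.2 hm0)
    _ = ε := by field_simp

end Key
section Assemble
set_option linter.unusedSectionVars false
set_option maxHeartbeats 1000000

lemma exists_small_h {t : ℝ} (ht : t ∈ Icc (0:ℝ) 1) {δ : ℝ} (hδ : 0 < δ) :
    ∃ h : ℝ, h ≠ 0 ∧ |h| < δ ∧ t + h ∈ Icc (0:ℝ) 1 := by
  obtain ⟨ht0, ht1⟩ := Set.mem_Icc.1 ht
  have hmin : 0 < min (δ/2) (1/2) := lt_min (by linarith) (by norm_num)
  have hminδ : min (δ/2) (1/2) < δ := (min_le_left _ _).trans_lt (by linarith)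
  have hmin2 : min (δ/2) (1/2) ≤ 1/2 := min_le_right _ _
  rcases le_or_gt t (1/2) with h1 | h1
  · exact ⟨min (δ/2) (1/2), hmin.ne', by rwa [abs_of_pos hmin],
      Set.mem_Icc.2 ⟨by linarith, by linarith⟩⟩
  · exact ⟨-(min (δ/2) (1/2)), neg_ne_zero.2 hmin.ne',
      by rwa [abs_neg, abs_of_pos hmin],
      Set.mem_Icc.2 ⟨by linarith, by linarith⟩⟩

variable {X : Type*} [AddCommGroup X] [Module ℝ X]

lemma exists_delta_avgSet {F f : ℝ → X} {t : ℝ}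
    (ht : t ∈ Icc (0:ℝ) 1) (q : Seminorm ℝ X)
    (Hq : Tendsto (fun h => q (diffQuot F t h - f t)) (dqFilter t) (𝓝 0))
    {ε : ℝ} (hε : 0 < ε) :
    ∃ δ > (0:ℝ), ∀ y ∈ avgSet F t δ, q (y - f t) < ε := by
  have hev : {h : ℝ | q (diffQuot F t h - f t) < ε} ∈ dqFilter t := by
    have := Hq.eventually (gt_mem_nhds hε)
    exact this
  rw [dqFilter, Metric.mem_nhdsWithin_iff] at hev
  obtain ⟨δ, hδ, hsub⟩ := hev
  refine ⟨δ, hδ, ?_⟩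
  rintro y ⟨h, hne, hlt, hmem, rfl⟩
  refine hsub ⟨?_, hne, hmem⟩
  rw [Metric.mem_ball, Real.dist_eq, sub_zero]
  exact hlt

lemma ptwise [UniformSpace X] [IsUniformAddGroup X] [ContinuousSMul ℝ X] [T2Space X]
    (p : ℕ → Seminorm ℝ X) (hp : WithSeminorms p) (hmono : Monotone p)
    (f F : ℝ → X) {t : ℝ} (ht : t ∈ Icc (0:ℝ) 1)
    (H : ∀ k, Tendsto (fun h => p k (diffQuot F t h - f t)) (dqFilter t) (𝓝 0)) :
    HasLimitAvgRange F t ∧ (∀ k : ℕ, pDiam (p k) (avgRange F t) = 0) ∧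
      avgRange F t = {f t} := by
  have HQ : ∀ q : Seminorm ℝ X, Continuous q →
      Tendsto (fun h => q (diffQuot F t h - f t)) (dqFilter t) (𝓝 0) := by
    intro q hq
    obtain ⟨s, C, hC0, hle⟩ := Seminorm.bound_of_continuous hp q hq
    set k0 := s.sup id with hk0
    have hsup : s.sup p ≤ p k0 :=
      Finset.sup_le fun i hi => hmono (Finset.le_sup (f := id) hi)
    have hbound : ∀ x, q x ≤ (C:ℝ) * p k0 x := by
      intro x
      have h1 : q x ≤ (C • s.sup p) x := hle x
      rw [Seminorm.smul_apply, NNReal.smul_def, smul_eq_mul] at h1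
      refine h1.trans ?_
      have h2 : s.sup p x ≤ p k0 x := hsup x
      exact mul_le_mul_of_nonneg_left h2 C.2
    apply squeeze_zero (fun h => apply_nonneg q _) (fun h => hbound _)
    have := (H k0).const_mul (C:ℝ)
    simpa using this
  have hsub1 : ({f t} : Set X) ⊆ avgRange F t := by
    intro x hx
    rw [Set.mem_singleton_iff] at hx; subst hx
    refine Set.mem_iInter₂.2 fun q hq => ?_
    refine Set.mem_iInter₂.2 fun δ hδ => ?_
    simp only [pClosure, Set.mem_setOf_eq]
    intro ε hε
    obtain ⟨δ', hδ', hall⟩ := exists_delta_avgSet ht q (HQ q hq) hε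
    obtain ⟨h, hne0, hlt, hmem⟩ := exists_small_h ht (lt_min hδ hδ')
    refine ⟨diffQuot F t h, ⟨h, hne0, hlt.trans_le (min_le_left _ _), hmem, rfl⟩, ?_⟩
    have hy' : diffQuot F t h ∈ avgSet F t δ' :=
      ⟨h, hne0, hlt.trans_le (min_le_right _ _), hmem, rfl⟩
    rw [map_sub_rev]
    exact hall _ hy'
  have hsub2 : avgRange F t ⊆ {f t} := by
    intro x hx
    rw [Set.mem_singleton_iff]
    by_contra hxne
    obtain ⟨k, hk⟩ := hp.separating_of_T1 (x - f t) (sub_ne_zero.2 hxne)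
    have hr : 0 < p k (x - f t) := lt_of_le_of_ne (apply_nonneg _ _) (Ne.symm hk)
    obtain ⟨δ, hδ, hall⟩ := exists_delta_avgSet ht (p k)
      (HQ (p k) (hp.continuous_seminorm k)) (half_pos hr)
    have hx' : x ∈ avgRangeP (p k) F t :=
      Set.mem_iInter₂.1 hx (p k) (hp.continuous_seminorm k)
    have hxP : x ∈ pClosure (p k) (avgSet F t δ) := Set.mem_iInter₂.1 hx' δ hδ
    obtain ⟨y, hy, hxy⟩ := hxP _ (half_pos hr)
    have hyft := hall y hy
    have htri : p k (x - f t) ≤ p k (x - y) + p k (y - f t) := by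
      calc p k (x - f t) = p k ((x - y) + (y - f t)) := by rw [sub_add_sub_cancel]
        _ ≤ _ := map_add_le_add _ _ _
    linarith
  have heq : avgRange F t = {f t} := Set.Subset.antisymm hsub2 hsub1
  refine ⟨⟨?_, ?_⟩, ?_, heq⟩
  · rw [heq]
    exact Bornology.isVonNBounded_singleton _
  · intro q hq ε hε
    obtain ⟨δ, hδ, hall⟩ := exists_delta_avgSet ht q (HQ q hq)
      (by positivity : (0:ℝ) < ε/3)
    refine ⟨δ, hδ, ?_⟩
    have hdle : pDiam q (avgSet F t δ) ≤ ENNReal.ofReal (2 * (ε/3)) := by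
      rw [pDiam]
      refine iSup₂_le fun x hx => iSup₂_le fun y hy => ?_
      refine ENNReal.ofReal_le_ofReal ?_
      have h1 := hall x hx
      have h2 := hall y hy
      have h2' : q (f t - y) = q (y - f t) := map_sub_rev _ _ _
      have htri : q (x - y) ≤ q (x - f t) + q (f t - y) := by
        calc q (x - y) = q ((x - f t) + (f t - y)) := by rw [sub_add_sub_cancel]
          _ ≤ _ := map_add_le_add _ _ _
      linarith
    refine lt_of_le_of_lt hdle ?_
    calc ENNReal.ofReal (2 * (ε/3)) < ENNReal.ofReal ε := by
          rw [ENNReal.ofReal_lt_ofReal_iff hε]; linarith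
      _ ≤ pDiam q (avgRange F t) + ENNReal.ofReal ε := le_add_self
  · intro k
    rw [heq, pDiam]
    simp

end Assemble

theorem stmt2' {X : Type*} [AddCommGroup X] [Module ℝ X] [UniformSpace X]
    [IsUniformAddGroup X] [ContinuousSMul ℝ X] [T2Space X] [CompleteSpace X]
    (p : ℕ → Seminorm ℝ X) (hp : WithSeminorms p) (hmono : Monotone p)
    (f F : ℝ → X) (ν : Set ℝ → X)
    (hint : HasIntegralBySeminorms f ν)
    (hprim : ∀ u v : ℝ, 0 ≤ u → u < v → v ≤ 1 → F v - F u = ν (Icc u v)) :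
    ∀ᵐ t ∂(volume : Measure ℝ), t ∈ Icc (0:ℝ) 1 →
      HasLimitAvgRange F t ∧ (∀ k : ℕ, pDiam (p k) (avgRange F t) = 0) ∧
        avgRange F t = {f t} := by
  have hae : ∀ᵐ t ∂(volume : Measure ℝ), ∀ k : ℕ, t ∈ Icc (0:ℝ) 1 →
      Tendsto (fun h => p k (diffQuot F t h - f t)) (dqFilter t) (𝓝 0) :=
    ae_all_iff.2 fun k => key_tendsto (p k) (hp.continuous_seminorm k) f F ν hint hprim
  filter_upwards [hae] with t H ht
  exact ptwise p hp hmono f F ht (fun k => H k ht)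


/-- If `f` is integrable by seminorms with primitive `F` on a Fréchet
space with increasing generating seminorms `(p_k)`, then a.e. `F` has the limit average
range, all the `p_k`-diameters of `A_F(t)` vanish, and `A_F(t) = {f t}`. -/
theorem stmt2 {X : Type*} [AddCommGroup X] [Module ℝ X] [UniformSpace X]
    [IsUniformAddGroup X] [ContinuousSMul ℝ X] [T2Space X] [CompleteSpace X]
    (p : ℕ → Seminorm ℝ X) (hp : WithSeminorms p) (hmono : Monotone p)
    (f F : ℝ → X) (ν : Set ℝ → X)
    (hint : HasIntegralBySeminorms f ν)
    (hprim : ∀ u v : ℝ, 0 ≤ u → u < v → v ≤ 1 → F v - F u = ν (Icc u v)) :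
    ∀ᵐ t ∂(volume : Measure ℝ), t ∈ Icc (0:ℝ) 1 →
      HasLimitAvgRange F t ∧ (∀ k : ℕ, pDiam (p k) (avgRange F t) = 0) ∧
        avgRange F t = {f t} := by
  have hae : ∀ᵐ t ∂(volume : Measure ℝ), ∀ k : ℕ, t ∈ Icc (0:ℝ) 1 →
      Tendsto (fun h => p k (diffQuot F t h - f t)) (dqFilter t) (𝓝 0) :=
    ae_all_iff.2 fun k => key_tendsto (p k) (hp.continuous_seminorm k) f F ν hint hprim
  filter_upwards [hae] with t H ht
  exact ptwise p hp hmono f F ht (fun k => H k ht)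

end
end

section
/- Let X be a complete Hausdorff locally convex topological vector space, F : [0,1] → X a function, and t ∈ [0,1]. If F has the limit average range at t, then the average range A_F(t) is nonempty. -/
open MeasureTheory Set Filter Topology ENNReal

noncomputable section

variable {X : Type*}

variable {Y : Type*}

/-- In a complete Hausdorff locally convex space, if `F` has the limit
average range at `t`, then the average range `A_F(t)` is nonempty. -/
theorem stmt4 {X : Type*} [AddCommGroup X] [Module ℝ X] [UniformSpace X]
    [IsUniformAddGroup X] [ContinuousSMul ℝ X] [LocallyConvexSpace ℝ X] [T2Space X]
    [CompleteSpace X]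
    (F : ℝ → X) (t : ℝ) (ht : t ∈ Icc (0:ℝ) 1) (h : HasLimitAvgRange F t) :
    (avgRange F t).Nonempty := by
  by_contra hne
  rw [Set.not_nonempty_iff_eq_empty] at hne
  -- the filter of difference quotients
  set L : Filter X := Filter.map (diffQuot F t) (dqFilter t) with hL
  have hNB : (dqFilter t).NeBot := by
    rw [dqFilter, ← mem_closure_iff_nhdsWithin_neBot, Metric.mem_closure_iff]
    intro ε hε
    rcases lt_or_ge t 1 with htl | htg
    · set m : ℝ := min (ε / 2) ((1 - t) / 2) with hm
      have hm0 : 0 < m := lt_min (by linarith) (by linarith)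
      have hm1 : m ≤ ε / 2 := min_le_left _ _
      have hm2 : m ≤ (1 - t) / 2 := min_le_right _ _
      refine ⟨m, ⟨ne_of_gt hm0, ?_, ?_⟩, ?_⟩
      · linarith [ht.1]
      · linarith
      · have : dist 0 m = m := by
          rw [Real.dist_eq, abs_sub_comm, sub_zero, abs_of_pos hm0]
        rw [this]; linarith
    · have ht1 : t = 1 := le_antisymm ht.2 htg
      set m : ℝ := min (ε / 2) (1 / 2) with hm
      have hm0 : 0 < m := lt_min (by linarith) (by norm_num)
      have hm1 : m ≤ ε / 2 := min_le_left _ _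
      have hm2 : m ≤ 1 / 2 := min_le_right _ _
      refine ⟨-m, ⟨neg_ne_zero.mpr (ne_of_gt hm0), ?_, ?_⟩, ?_⟩
      · rw [ht1]; linarith
      · rw [ht1]; linarith
      · have : dist 0 (-m) = m := by
          rw [Real.dist_eq, zero_sub, neg_neg, abs_of_pos hm0]
        rw [this]; linarith
  have hLNB : L.NeBot := Filter.map_neBot
  -- avgSet belongs to L
  have hmem : ∀ δ : ℝ, 0 < δ → avgSet F t δ ∈ L := by
    intro δ hδ
    rw [hL, Filter.mem_map]
    have h1 : {h : ℝ | |h| < δ} ∈ 𝓝 (0:ℝ) := by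
      have : {h : ℝ | |h| < δ} = Metric.ball (0:ℝ) δ := by
        ext h; simp [Real.dist_eq]
      rw [this]; exact Metric.ball_mem_nhds _ hδ
    have h2 : {h : ℝ | |h| < δ} ∈ dqFilter t := nhdsWithin_le_nhds h1
    have h3 : {h : ℝ | h ≠ 0 ∧ t + h ∈ Icc (0:ℝ) 1} ∈ dqFilter t :=
      self_mem_nhdsWithin
    filter_upwards [h2, h3] with h hh1 hh2
    exact ⟨h, hh2.1, hh1, hh2.2, rfl⟩
  -- diameter control from the hypothesis
  have hdiam : ∀ p : Seminorm ℝ X, Continuous p → ∀ ε : ℝ, 0 < ε → ∃ δ > (0:ℝ),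
      ∀ x ∈ avgSet F t δ, ∀ y ∈ avgSet F t δ, p (x - y) < ε := by
    intro p hp ε hε
    obtain ⟨δ, hδ, hlt⟩ := h.2 p hp ε hε
    have hzero : pDiam p (avgRange F t) = 0 := by
      simp [pDiam, hne]
    rw [hzero, zero_add] at hlt
    refine ⟨δ, hδ, fun x hx y hy => ?_⟩
    have hle : ENNReal.ofReal (p (x - y)) ≤ pDiam p (avgSet F t δ) := by
      calc ENNReal.ofReal (p (x - y))
          ≤ ⨆ y' ∈ avgSet F t δ, ENNReal.ofReal (p (x - y')) := by
            exact le_iSup₂ (f := fun y' (_ : y' ∈ avgSet F t δ) =>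
              ENNReal.ofReal (p (x - y'))) y hy
        _ ≤ pDiam p (avgSet F t δ) := by
            exact le_iSup₂ (f := fun x' (_ : x' ∈ avgSet F t δ) =>
              ⨆ y' ∈ avgSet F t δ, ENNReal.ofReal (p (x' - y'))) x hx
    have := lt_of_le_of_lt hle hlt
    rwa [ENNReal.ofReal_lt_ofReal_iff hε] at this
  -- seminorm basis of neighborhoods of zero
  have hws := with_gaugeSeminormFamily (𝕜 := ℝ) (E := X)
  have hbasis : ∀ U ∈ 𝓝 (0:X), ∃ q : Seminorm ℝ X, Continuous q ∧
      ∃ r > (0:ℝ), q.ball 0 r ⊆ U := by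
    intro U hU
    obtain ⟨⟨s, r⟩, hr, hsub⟩ := hws.hasBasis_zero_ball.mem_iff.mp hU
    refine ⟨s.sup (gaugeSeminormFamily ℝ X), ?_, r, hr, hsub⟩
    exact Seminorm.continuous (r := r) (hws.hasBasis_zero_ball.mem_of_mem hr)
  -- L is Cauchy
  have hC : Cauchy L := by
    refine ⟨hLNB, ?_⟩
    rw [uniformity_eq_comap_nhds_zero X]
    intro U hU
    rw [Filter.mem_comap] at hU
    obtain ⟨V, hV, hVsub⟩ := hU
    obtain ⟨q, hq, r, hr, hqV⟩ := hbasis V hV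
    obtain ⟨δ, hδ, hd⟩ := hdiam q hq r hr
    have hprod : avgSet F t δ ×ˢ avgSet F t δ ∈ L ×ˢ L :=
      Filter.prod_mem_prod (hmem δ hδ) (hmem δ hδ)
    refine Filter.mem_of_superset hprod ?_
    rintro ⟨x, y⟩ ⟨hx, hy⟩
    apply hVsub
    apply hqV
    rw [Seminorm.mem_ball_zero]
    exact hd y hy x hx
  obtain ⟨x, hx⟩ := CompleteSpace.complete hC
  -- x belongs to avgRange F t, contradiction
  have hxmem : x ∈ avgRange F t := by
    rw [avgRange]
    refine Set.mem_iInter₂.mpr fun p hp => ?_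
    rw [avgRangeP]
    refine Set.mem_iInter₂.mpr fun δ hδ => ?_
    intro ε hε
    have hVnhds : {y : X | p (x - y) < ε} ∈ 𝓝 x := by
      have hcont : Continuous fun y : X => p (x - y) :=
        hp.comp (continuous_const.sub continuous_id)
      have hopen : IsOpen {y : X | p (x - y) < ε} :=
        isOpen_lt hcont continuous_const
      exact hopen.mem_nhds (by simp [hε])
    have hVL : {y : X | p (x - y) < ε} ∈ L := hx hVnhds
    obtain ⟨y, hy1, hy2⟩ := Filter.nonempty_of_mem (Filter.inter_mem hVL (hmem δ hδ))
    exact ⟨y, hy2, hy1⟩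
  rw [hne] at hxmem
  exact hxmem

end
end

section
/- Let X be a Hausdorff locally convex topological vector space, p a continuous seminorm on X, Y a normed space, and T : X → Y a linear map satisfying ‖T x‖ = p(x) for all x ∈ X. Let F : [0,1] → X and t ∈ [0,1]. If F has the limit average range at t, then the function T∘F : [0,1] → Y has the limit average range at t (where for the normed-space-valued function T∘F the average range is A_{T∘F}(t) = ∩_{δ>0} closure(A_{T∘F}(t,δ)), closure taken in the norm topology of Y). -/
open MeasureTheory Set Filter Topology ENNReal

noncomputable section

variable {X : Type*}

variable {Y : Type*}

/-- If `T : X → Y` is linear with `‖T x‖ = p x` for a continuous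
seminorm `p`, and `F` has the limit average range at `t`, then so does `T ∘ F`. -/
theorem stmt5 {X : Type*} [AddCommGroup X] [Module ℝ X] [TopologicalSpace X]
    [IsTopologicalAddGroup X] [ContinuousSMul ℝ X] [LocallyConvexSpace ℝ X] [T2Space X]
    {Y : Type*} [NormedAddCommGroup Y] [NormedSpace ℝ Y]
    (p : Seminorm ℝ X) (hp : Continuous p)
    (T : X →ₗ[ℝ] Y) (hT : ∀ x : X, ‖T x‖ = p x)
    (F : ℝ → X) (t : ℝ) (ht : t ∈ Icc (0:ℝ) 1)
    (h : HasLimitAvgRange F t) :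
    HasLimitAvgRangeN (fun s => T (F s)) t := by
  obtain ⟨hb, hlim⟩ := h
  set G : ℝ → Y := fun s => T (F s) with hG
  have himg : ∀ δ : ℝ, avgSet G t δ = T '' avgSet F t δ := by
    intro δ
    ext y
    constructor
    · rintro ⟨h', hne, hlt, hmem, rfl⟩
      exact ⟨diffQuot F t h', ⟨h', hne, hlt, hmem, rfl⟩,
        by simp [diffQuot, map_sub, _root_.map_smul, hG]⟩
    · rintro ⟨x, ⟨h', hne, hlt, hmem, rfl⟩, rfl⟩
      exact ⟨h', hne, hlt, hmem, by simp [diffQuot, map_sub, _root_.map_smul, hG]⟩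
  have hTdist : ∀ x y : X, edist (T x) (T y) = ENNReal.ofReal (p (x - y)) := by
    intro x y
    rw [edist_dist, dist_eq_norm, ← map_sub, hT]
  have hmem_le : ∀ (S : Set X) (x : X), x ∈ S → ∀ y ∈ S,
      ENNReal.ofReal (p (x - y)) ≤ pDiam p S := by
    intro S x hx y hy
    calc ENNReal.ofReal (p (x - y))
        ≤ ⨆ y ∈ S, ENNReal.ofReal (p (x - y)) := le_biSup (fun y => ENNReal.ofReal (p (x - y))) hy
      _ ≤ pDiam p S := le_biSup (fun x => ⨆ y ∈ S, ENNReal.ofReal (p (x - y))) hx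
  have hdiam : ∀ S : Set X, EMetric.diam (T '' S) = pDiam p S := by
    intro S
    apply le_antisymm
    · apply EMetric.diam_le
      rintro y ⟨x, hx, rfl⟩ y' ⟨x', hx', rfl⟩
      rw [hTdist]
      exact hmem_le S x hx x' hx'
    · refine iSup₂_le fun x hx => iSup₂_le fun y hy => ?_
      rw [← hTdist]
      exact EMetric.edist_le_diam_of_mem (mem_image_of_mem _ hx) (mem_image_of_mem _ hy)
  -- T maps avgRange F t into avgRangeN G t
  have hsub : T '' avgRange F t ⊆ avgRangeN G t := by
    rintro _ ⟨x, hx, rfl⟩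
    have hx' : x ∈ avgRangeP p F t := by
      have := mem_iInter₂.1 hx p hp
      exact this
    refine mem_iInter₂.2 fun δ hδ => ?_
    have hxδ : x ∈ pClosure p (avgSet F t δ) := mem_iInter₂.1 hx' δ hδ
    rw [Metric.mem_closure_iff]
    intro ε hε
    obtain ⟨y, hy, hpy⟩ := hxδ ε hε
    refine ⟨T y, ?_, ?_⟩
    · rw [himg]; exact mem_image_of_mem _ hy
    · rw [dist_eq_norm, ← map_sub, hT]; exact hpy
  have hd2 : pDiam p (avgRange F t) ≤ EMetric.diam (avgRangeN G t) := by
    rw [← hdiam]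
    exact EMetric.diam_mono hsub
  -- bound on pDiam of avgRange from von Neumann boundedness
  have hfin : pDiam p (avgRange F t) ≠ ⊤ := by
    have hU : p.ball 0 1 ∈ 𝓝 (0 : X) := Seminorm.ball_mem_nhds hp one_pos
    obtain ⟨r, hr, hrc⟩ := (hb hU).exists_pos
    have hbd : ∀ x ∈ avgRange F t, p x ≤ r := by
      intro x hx
      obtain ⟨u, hu, rfl⟩ := hrc r (by rw [Real.norm_eq_abs, abs_of_pos hr]) hx
      have hu' : p u < 1 := by simpa [Seminorm.mem_ball, sub_zero] using hu
      rw [map_smul_eq_mul, Real.norm_eq_abs, abs_of_pos hr]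
      nlinarith [apply_nonneg p u]
    refine ne_top_of_le_ne_top (ENNReal.ofReal_ne_top : ENNReal.ofReal (2 * r) ≠ ⊤) ?_
    refine iSup₂_le fun x hx => iSup₂_le fun y hy => ?_
    refine ENNReal.ofReal_le_ofReal ?_
    calc p (x - y) ≤ p x + p y := map_sub_le_add p x y
      _ ≤ 2 * r := by linarith [hbd x hx, hbd y hy]
  constructor
  · -- boundedness
    obtain ⟨δ, hδ, hlt⟩ := hlim p hp 1 one_pos
    have hsub' : avgRangeN G t ⊆ closure (avgSet G t δ) := by
      intro y hy
      exact mem_iInter₂.1 hy δ hδ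
    have hdne : EMetric.diam (closure (avgSet G t δ)) ≠ ⊤ := by
      refine ne_of_eq_of_ne (EMetric.diam_closure (avgSet G t δ) : EMetric.diam (closure (avgSet G t δ)) = EMetric.diam (avgSet G t δ)) ?_
      rw [himg]; refine ne_of_eq_of_ne (hdiam _) ?_
      refine ne_top_of_le_ne_top ?_ hlt.le
      exact ENNReal.add_ne_top.2 ⟨hfin, by simp⟩
    exact (Metric.isBounded_iff_ediam_ne_top.2 hdne).subset hsub'
  · intro ε hε
    obtain ⟨δ, hδ, hlt⟩ := hlim p hp ε hε
    refine ⟨δ, hδ, ?_⟩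
    calc EMetric.diam (avgSet G t δ) = pDiam p (avgSet F t δ) := by rw [himg, hdiam]
      _ < pDiam p (avgRange F t) + ENNReal.ofReal ε := hlt
      _ ≤ EMetric.diam (avgRangeN G t) + ENNReal.ofReal ε := add_le_add_left hd2 _


end
end

section
/- Let X be a Banach space and f : [0,1] → X a function. Then f is integrable by seminorms (with respect to the family of continuous seminorms of X, which includes the norm) if and only if f is Bochner integrable on [0,1]; in that case, for every Lebesgue measurable E ⊆ [0,1] the integral by seminorms of f over E equals the Bochner integral (B)∫_E f dλ. -/
open MeasureTheory Set Filter Topology ENNReal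

noncomputable section

variable {X : Type*}

variable {Y : Type*}

section Aux

set_option linter.unusedSectionVars false

variable {W : Type*} [NormedAddCommGroup W] [NormedSpace ℝ W] [CompleteSpace W]

lemma IsSimple.stronglyMeasurable' {g : ℝ → W} (hg : IsSimple g) :
    MeasureTheory.StronglyMeasurable g :=
  (⟨g, hg.2, hg.1⟩ : SimpleFunc ℝ W).stronglyMeasurable

lemma IsSimple.integrableOn' {g : ℝ → W} (hg : IsSimple g) :
    IntegrableOn g (Icc (0:ℝ) 1) volume := by
  obtain ⟨C, hC⟩ := (hg.1.image norm).bddAbove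
  refine Integrable.mono'
    (integrableOn_const measure_Icc_lt_top.ne :
      IntegrableOn (fun _ => C) (Icc (0:ℝ) 1) volume)
    hg.stronglyMeasurable'.aestronglyMeasurable ?_
  filter_upwards with t
  exact hC ⟨g t, mem_range_self t, rfl⟩

lemma simpleIntegral_eq_integral {g : ℝ → W} (hg : IsSimple g) {E : Set ℝ}
    (hE : MeasurableSet E) (hEfin : volume E < ⊤) :
    simpleIntegral g E = ∫ t in E, g t := by
  classical
  have hrepr : ∀ t, g t = ∑ x ∈ hg.1.toFinset, (g ⁻¹' {x}).indicator (fun _ => x) t := by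
    intro t
    rw [Finset.sum_eq_single (g t)]
    · simp
    · intro b _ hb
      exact Set.indicator_of_notMem (fun h => hb (Set.eq_of_mem_singleton (Set.mem_preimage.1 h)).symm) _
    · intro h
      exact absurd (hg.1.mem_toFinset.2 (mem_range_self t)) h
  have hint : ∀ x ∈ hg.1.toFinset,
      IntegrableOn ((g ⁻¹' {x}).indicator (fun _ => x)) E volume := by
    intro x _
    rw [IntegrableOn, integrable_indicator_iff (hg.2 x)]
    refine integrableOn_const ?_
    exact (((measure_mono (Set.subset_univ _)).trans_eq (Measure.restrict_apply_univ _)).trans_lt hEfin).ne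
  calc simpleIntegral g E = ∑ x ∈ hg.1.toFinset, (volume (E ∩ g ⁻¹' {x})).toReal • x := by
        rw [simpleIntegral, dif_pos hg.1]
    _ = ∑ x ∈ hg.1.toFinset, ∫ t in E, (g ⁻¹' {x}).indicator (fun _ => x) t := by
        refine Finset.sum_congr rfl fun x _ => ?_
        rw [setIntegral_indicator (hg.2 x), setIntegral_const]; rfl
    _ = ∫ t in E, ∑ x ∈ hg.1.toFinset, (g ⁻¹' {x}).indicator (fun _ => x) t :=
        (integral_finset_sum _ hint).symm
    _ = ∫ t in E, g t := by
        refine integral_congr_ae (Filter.Eventually.of_forall fun t => ?_)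
        exact (hrepr t).symm

lemma tendsto_setIntegral_of_L1' {fk : ℕ → ℝ → W} {f : ℝ → W}
    (hfk : ∀ k, IntegrableOn (fk k) (Icc (0:ℝ) 1) volume)
    (hf : IntegrableOn f (Icc (0:ℝ) 1) volume)
    (hnormint : ∀ k, IntegrableOn (fun t => ‖fk k t - f t‖) (Icc (0:ℝ) 1) volume)
    (hnorm : Tendsto (fun k => ∫ t in Icc (0:ℝ) 1, ‖fk k t - f t‖) atTop (𝓝 0))
    {E : Set ℝ} (hEsub : E ⊆ Icc (0:ℝ) 1) :
    Tendsto (fun k => ∫ t in E, fk k t) atTop (𝓝 (∫ t in E, f t)) := by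
  rw [tendsto_iff_norm_sub_tendsto_zero]
  have key : ∀ k, ‖(∫ t in E, fk k t) - ∫ t in E, f t‖ ≤
      ∫ t in Icc (0:ℝ) 1, ‖fk k t - f t‖ := by
    intro k
    have h1 : IntegrableOn (fk k) E volume := (hfk k).mono_set hEsub
    have h2 : IntegrableOn f E volume := hf.mono_set hEsub
    rw [← integral_sub h1 h2]
    refine (norm_integral_le_integral_norm _).trans ?_
    exact setIntegral_mono_set (hnormint k) (Filter.Eventually.of_forall fun t => norm_nonneg _)
      (HasSubset.Subset.eventuallyLE hEsub)
  exact squeeze_zero (fun k => norm_nonneg _) key hnorm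

lemma integrableOn_of_has {f : ℝ → W} {ν : Set ℝ → W}
    (h : HasIntegralBySeminorms f ν) : IntegrableOn f (Icc (0:ℝ) 1) volume := by
  obtain ⟨fk, hsimp, ⟨Z, hZ0, hZconv⟩, hint, -, -⟩ :=
    h (normSeminorm ℝ W) (by rw [coe_normSeminorm]; exact continuous_norm)
  have hZae : ∀ᵐ t ∂(volume.restrict (Icc (0:ℝ) 1)), t ∉ Z := by
    refine measure_eq_zero_iff_ae_notMem.1 (le_antisymm ?_ (zero_le))
    exact (Measure.restrict_apply_le _ _).trans hZ0.le
  have hmem : ∀ᵐ t ∂(volume.restrict (Icc (0:ℝ) 1)), t ∈ Icc (0:ℝ) 1 :=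
    ae_restrict_mem measurableSet_Icc
  have hconv : ∀ᵐ t ∂(volume.restrict (Icc (0:ℝ) 1)),
      Tendsto (fun k => fk k t) atTop (𝓝 (f t)) := by
    filter_upwards [hZae, hmem] with t htZ htI
    have h2 := hZconv t htI htZ
    simp only [coe_normSeminorm] at h2
    exact tendsto_iff_norm_sub_tendsto_zero.2 h2
  have hfsm : AEStronglyMeasurable f (volume.restrict (Icc (0:ℝ) 1)) :=
    aestronglyMeasurable_of_tendsto_ae atTop
      (fun k => (hsimp k).stronglyMeasurable'.aestronglyMeasurable) hconv
  have h0 := hint 0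
  simp only [coe_normSeminorm] at h0
  have hd : Integrable (fun t => fk 0 t - f t) (volume.restrict (Icc (0:ℝ) 1)) :=
    ⟨(hsimp 0).stronglyMeasurable'.aestronglyMeasurable.sub hfsm,
      (hasFiniteIntegral_norm_iff _).1 h0.hasFiniteIntegral⟩
  have hfinal : Integrable (fun t => fk 0 t - (fk 0 t - f t))
      (volume.restrict (Icc (0:ℝ) 1)) := (hsimp 0).integrableOn'.sub hd
  simpa [IntegrableOn] using hfinal

lemma nu_eq_of_has {f : ℝ → W} {ν : Set ℝ → W}
    (h : HasIntegralBySeminorms f ν) {E : Set ℝ} (hE : MeasurableSet E)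
    (hEsub : E ⊆ Icc (0:ℝ) 1) : ν E = ∫ t in E, f t := by
  have hf := integrableOn_of_has h
  obtain ⟨fk, hsimp, -, hint, htend, hE'⟩ :=
    h (normSeminorm ℝ W) (by rw [coe_normSeminorm]; exact continuous_norm)
  simp only [coe_normSeminorm] at hint htend hE'
  have hEfin : volume E < ⊤ := (measure_mono hEsub).trans_lt measure_Icc_lt_top
  have h1 : Tendsto (fun k => ∫ t in E, fk k t) atTop (𝓝 (∫ t in E, f t)) :=
    tendsto_setIntegral_of_L1' (fun k => (hsimp k).integrableOn') hf hint htend hEsub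
  have h2 : Tendsto (fun k => ∫ t in E, fk k t) atTop (𝓝 (ν E)) := by
    have h3 := hE' E hE hEsub
    have heq : ∀ k, simpleIntegral (fk k) E = ∫ t in E, fk k t := fun k =>
      simpleIntegral_eq_integral (hsimp k) hE hEfin
    rw [tendsto_iff_norm_sub_tendsto_zero]
    simpa only [heq] using h3
  exact tendsto_nhds_unique h2 h1

lemma hasIntegral_of_integrableOn {f : ℝ → W}
    (hf : IntegrableOn f (Icc (0:ℝ) 1) volume) :
    HasIntegralBySeminorms f (fun E => ∫ t in E, f t) := by
  classical
  letI : MeasurableSpace W := borel W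
  haveI : BorelSpace W := ⟨rfl⟩
  have hsm := hf.aestronglyMeasurable
  set f' := hsm.mk f with hf'def
  have hf'sm : MeasureTheory.StronglyMeasurable f' := hsm.stronglyMeasurable_mk
  have hff' : f =ᵐ[volume.restrict (Icc (0:ℝ) 1)] f' := hsm.ae_eq_mk
  have fmeas : Measurable f' := hf'sm.measurable
  haveI : TopologicalSpace.SeparableSpace (range f' ∪ {0} : Set W) :=
    hf'sm.separableSpace_range_union_singleton
  have hf'int : Integrable f' (volume.restrict (Icc (0:ℝ) 1)) := hf.congr hff'
  set fk : ℕ → ℝ → W :=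
    fun n => SimpleFunc.approxOn f' fmeas (range f' ∪ {0}) 0 (by simp) n with hfkdef
  have hptwise : ∀ t, Tendsto (fun k => fk k t) atTop (𝓝 (f' t)) := fun t =>
    SimpleFunc.tendsto_approxOn fmeas _ (subset_closure (by simp))
  have hL1 : Tendsto (fun n => ∫⁻ t, ‖fk n t - f' t‖ₑ ∂(volume.restrict (Icc (0:ℝ) 1)))
      atTop (𝓝 0) :=
    SimpleFunc.tendsto_approxOn_range_L1_enorm fmeas hf'int
  have hfk_simple : ∀ k, IsSimple (fk k) := fun k =>
    ⟨(SimpleFunc.approxOn f' fmeas _ 0 _ k).finite_range,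
     fun x => (SimpleFunc.approxOn f' fmeas _ 0 _ k).measurableSet_fiber x⟩
  have hfk_int : ∀ k, IntegrableOn (fk k) (Icc (0:ℝ) 1) volume := fun k =>
    (hfk_simple k).integrableOn'
  have hnull : volume.restrict (Icc (0:ℝ) 1) {t | ¬ f t = f' t} = 0 := ae_iff.1 hff'
  obtain ⟨N, hNsub, hNmeas, hNnull⟩ := exists_measurable_superset_of_null hnull
  have hZvol : volume (N ∩ Icc (0:ℝ) 1) = 0 := by
    rwa [Measure.restrict_apply hNmeas] at hNnull
  have hnormint_base : ∀ k, Integrable (fun t => ‖fk k t - f t‖)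
      (volume.restrict (Icc (0:ℝ) 1)) := fun k => ((hfk_int k).sub hf).norm
  have hL1real : Tendsto (fun k => ∫ t in Icc (0:ℝ) 1, ‖fk k t - f t‖) atTop (𝓝 0) := by
    have heq : ∀ k, ∫ t in Icc (0:ℝ) 1, ‖fk k t - f t‖ =
        (∫⁻ t, ‖fk k t - f' t‖ₑ ∂(volume.restrict (Icc (0:ℝ) 1))).toReal := by
      intro k
      have hsub : AEStronglyMeasurable (fun t => fk k t - f' t)
          (volume.restrict (Icc (0:ℝ) 1)) :=
        (hfk_int k).aestronglyMeasurable.sub hf'int.aestronglyMeasurable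
      rw [integral_congr_ae (g := fun t => ‖fk k t - f' t‖)
          (hff'.mono fun t ht => by rw [ht]),
        integral_norm_eq_lintegral_enorm hsub]
    simp only [heq]
    have := (ENNReal.tendsto_toReal (a := 0) (by simp)).comp hL1
    simpa [Function.comp_def] using this
  intro p hp
  obtain ⟨C, hCpos, hC⟩ := p.bound_of_continuous_normedSpace hp
  have pint : ∀ k, Integrable (fun t => p (fk k t - f t))
      (volume.restrict (Icc (0:ℝ) 1)) := by
    intro k
    refine Integrable.mono' ((hnormint_base k).const_mul C)
      (hp.comp_aestronglyMeasurable
        ((hfk_int k).aestronglyMeasurable.sub hf.aestronglyMeasurable)) ?_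
    filter_upwards with t
    rw [Real.norm_of_nonneg (apply_nonneg p _)]
    exact hC _
  refine ⟨fk, hfk_simple, ⟨N ∩ Icc (0:ℝ) 1, hZvol, ?_⟩, pint, ?_, ?_⟩
  · intro t htI htZ
    have htN : t ∉ N := fun hN => htZ ⟨hN, htI⟩
    have hfeq : f t = f' t := by
      by_contra hne
      exact htN (hNsub hne)
    have hdiff : Tendsto (fun k => fk k t - f t) atTop (𝓝 0) := by
      rw [hfeq]
      simpa using (hptwise t).sub_const (f' t)
    have hcomp := (hp.tendsto 0).comp hdiff
    simpa [Function.comp_def] using hcomp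
  · refine squeeze_zero (fun k => integral_nonneg fun t => apply_nonneg p _) (fun k => ?_)
      (by simpa using hL1real.const_mul C)
    calc ∫ t in Icc (0:ℝ) 1, p (fk k t - f t)
        ≤ ∫ t in Icc (0:ℝ) 1, C * ‖fk k t - f t‖ :=
          integral_mono (pint k) ((hnormint_base k).const_mul C) fun t => hC _
      _ = C * ∫ t in Icc (0:ℝ) 1, ‖fk k t - f t‖ := by
          simpa [smul_eq_mul] using integral_smul (μ := volume.restrict (Icc (0:ℝ) 1)) C (fun t => ‖fk k t - f t‖)
  · intro E hEmeas hEsub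
    have hEfin : volume E < ⊤ := (measure_mono hEsub).trans_lt measure_Icc_lt_top
    have h1 : Tendsto (fun k => ∫ t in E, fk k t) atTop (𝓝 (∫ t in E, f t)) :=
      tendsto_setIntegral_of_L1' hfk_int hf hnormint_base hL1real hEsub
    have hdiff : Tendsto (fun k => (∫ t in E, fk k t) - ∫ t in E, f t) atTop (𝓝 0) := by
      simpa using h1.sub_const (∫ t in E, f t)
    have hcomp := (hp.tendsto 0).comp hdiff
    have heq : ∀ k, simpleIntegral (fk k) E = ∫ t in E, fk k t := fun k =>
      simpleIntegral_eq_integral (hfk_simple k) hEmeas hEfin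
    simp only [Function.comp_def, map_zero] at hcomp
    simpa only [heq] using hcomp

end Aux

/-- In a Banach space, integrability by seminorms coincides with
Bochner integrability on `[0,1]`, and the integral by seminorms coincides with the
Bochner integral. -/
theorem stmt7 {X : Type*} [NormedAddCommGroup X] [NormedSpace ℝ X] [CompleteSpace X]
    (f : ℝ → X) :
    ((∃ ν : Set ℝ → X, HasIntegralBySeminorms f ν) ↔
        IntegrableOn f (Icc (0:ℝ) 1) volume) ∧
      (∀ ν : Set ℝ → X, HasIntegralBySeminorms f ν →
        ∀ E : Set ℝ, MeasurableSet E → E ⊆ Icc (0:ℝ) 1 → ν E = ∫ t in E, f t) := by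
  constructor
  · constructor
    · rintro ⟨ν, hν⟩
      exact integrableOn_of_has hν
    · intro hf
      exact ⟨_, hasIntegral_of_integrableOn hf⟩
  · intro ν hν E hE hEsub
    exact nu_eq_of_has hν hE hEsub

end
end

section
/- Let X = ℝ^[0,1] with the product topology, generated by the seminorms p_j(x) = |x(j)|, j ∈ [0,1], and define F : [0,1] → X by F(t)(θ) = min(θ, t). For t ∈ (0,1) let x_t^+ ∈ X be the indicator function of (t,1] and x_t^- ∈ X the indicator function of [t,1]. Then for every t ∈ (0,1), F has the limit average range at t and the average range is exactly A_F(t) = {x_t^+, x_t^-}. Moreover, p_t-diam(A_F(t,δ)) = 1 = p_t-diam(A_F(t)) for every δ > 0 small enough that (t−δ, t+δ) ⊆ (0,1), and for every j ≠ t, p_j-diam(A_F(t,δ)) = 0 = p_j-diam(A_F(t)) whenever 0 < δ < |t − j|. -/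
open MeasureTheory Set Filter Topology ENNReal

noncomputable section

variable {X : Type*}

variable {Y : Type*}

/-- The evaluation seminorm `p_j(x) = |x j|` on `ℝ^[0,1]`. -/
def evalSeminorm (j : Icc (0:ℝ) 1) : Seminorm ℝ (Icc (0:ℝ) 1 → ℝ) :=
  (normSeminorm ℝ ℝ).comp (LinearMap.proj j)


section Helpers


variable {F : ℝ → (Icc (0:ℝ) 1 → ℝ)} {t : ℝ}

lemma dq_eval (hF : ∀ (s : ℝ) (θ : Icc (0:ℝ) 1), F s θ = min (θ : ℝ) s)
    (h : ℝ) (θ : Icc (0:ℝ) 1) :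
    diffQuot F t h θ = h⁻¹ * (min (θ:ℝ) (t+h) - min (θ:ℝ) t) := by
  simp [diffQuot, hF, Pi.smul_apply, Pi.sub_apply, smul_eq_mul]

lemma dq_left (hF : ∀ (s : ℝ) (θ : Icc (0:ℝ) 1), F s θ = min (θ : ℝ) s)
    {h : ℝ} {θ : Icc (0:ℝ) 1} (hθ : (θ:ℝ) < t) (hh : |h| < t - θ) :
    diffQuot F t h θ = 0 := by
  rw [dq_eval hF]
  have h1 : (θ:ℝ) ≤ t + h := by
    have := neg_abs_le h; linarith
  rw [min_eq_left h1, min_eq_left hθ.le, sub_self, mul_zero]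

lemma dq_right (hF : ∀ (s : ℝ) (θ : Icc (0:ℝ) 1), F s θ = min (θ : ℝ) s)
    {h : ℝ} {θ : Icc (0:ℝ) 1} (hne : h ≠ 0) (hθ : t < (θ:ℝ)) (hh : |h| < (θ:ℝ) - t) :
    diffQuot F t h θ = 1 := by
  rw [dq_eval hF]
  have h1 : t + h ≤ (θ:ℝ) := by
    have := le_abs_self h; linarith
  rw [min_eq_right h1, min_eq_right hθ.le, add_sub_cancel_left, inv_mul_cancel₀ hne]

lemma dq_at_pos (hF : ∀ (s : ℝ) (θ : Icc (0:ℝ) 1), F s θ = min (θ : ℝ) s)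
    {h : ℝ} {θ : Icc (0:ℝ) 1} (hθ : (θ:ℝ) = t) (hh : 0 < h) :
    diffQuot F t h θ = 0 := by
  rw [dq_eval hF, hθ, min_eq_left (by linarith), min_self, sub_self, mul_zero]

lemma dq_at_neg (hF : ∀ (s : ℝ) (θ : Icc (0:ℝ) 1), F s θ = min (θ : ℝ) s)
    {h : ℝ} {θ : Icc (0:ℝ) 1} (hθ : (θ:ℝ) = t) (hh : h < 0) :
    diffQuot F t h θ = 1 := by
  rw [dq_eval hF, hθ, min_eq_right (by linarith), min_self, add_sub_cancel_left,
    inv_mul_cancel₀ (ne_of_lt hh)]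

lemma dq_mem01 (hF : ∀ (s : ℝ) (θ : Icc (0:ℝ) 1), F s θ = min (θ : ℝ) s)
    {h : ℝ} {θ : Icc (0:ℝ) 1} (hθ : (θ:ℝ) = t) (hne : h ≠ 0) :
    diffQuot F t h θ = 0 ∨ diffQuot F t h θ = 1 := by
  rcases hne.lt_or_gt with hh | hh
  · exact Or.inr (dq_at_neg hF hθ hh)
  · exact Or.inl (dq_at_pos hF hθ hh)

lemma tendsto_dq_pos (hF : ∀ (s : ℝ) (θ : Icc (0:ℝ) 1), F s θ = min (θ : ℝ) s)
    (ht : t ∈ Ioo (0:ℝ) 1) {xp : Icc (0:ℝ) 1 → ℝ}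
    (hxp : ∀ θ : Icc (0:ℝ) 1, xp θ = if t < (θ : ℝ) then 1 else 0) :
    Tendsto (fun h => diffQuot F t h) (𝓝[>] (0:ℝ)) (𝓝 xp) := by
  rw [tendsto_pi_nhds]
  intro θ
  have : ∀ᶠ h in 𝓝[>] (0:ℝ), diffQuot F t h θ = xp θ := by
    rcases lt_trichotomy (θ:ℝ) t with hθ | hθ | hθ
    · filter_upwards [Ioo_mem_nhdsGT_of_mem
        (show (0:ℝ) ∈ Ico (0:ℝ) (t - (θ:ℝ)) from ⟨le_refl _, by linarith⟩)] with h hh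
      rw [dq_left hF hθ (by rw [abs_of_pos hh.1]; exact hh.2), hxp, if_neg (by linarith)]
    · filter_upwards [self_mem_nhdsWithin] with h hh
      rw [dq_at_pos hF hθ hh, hxp, if_neg (by rw [hθ]; exact lt_irrefl t)]
    · filter_upwards [Ioo_mem_nhdsGT_of_mem
        (show (0:ℝ) ∈ Ico (0:ℝ) ((θ:ℝ) - t) from ⟨le_refl _, by linarith⟩)] with h hh
      rw [dq_right hF (ne_of_gt hh.1) hθ (by rw [abs_of_pos hh.1]; exact hh.2), hxp, if_pos hθ]
  exact Tendsto.congr' (this.mono fun h hh => hh.symm) tendsto_const_nhds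

lemma tendsto_dq_neg (hF : ∀ (s : ℝ) (θ : Icc (0:ℝ) 1), F s θ = min (θ : ℝ) s)
    (ht : t ∈ Ioo (0:ℝ) 1) {xm : Icc (0:ℝ) 1 → ℝ}
    (hxm : ∀ θ : Icc (0:ℝ) 1, xm θ = if t ≤ (θ : ℝ) then 1 else 0) :
    Tendsto (fun h => diffQuot F t h) (𝓝[<] (0:ℝ)) (𝓝 xm) := by
  rw [tendsto_pi_nhds]
  intro θ
  have : ∀ᶠ h in 𝓝[<] (0:ℝ), diffQuot F t h θ = xm θ := by
    rcases lt_trichotomy (θ:ℝ) t with hθ | hθ | hθ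
    · filter_upwards [Ioo_mem_nhdsLT_of_mem
        (show (0:ℝ) ∈ Ioc ((θ:ℝ) - t) 0 from ⟨by linarith, le_refl _⟩)] with h hh
      rw [dq_left hF hθ (by rw [abs_of_neg hh.2]; linarith [hh.1]), hxm, if_neg (by linarith)]
    · filter_upwards [self_mem_nhdsWithin] with h hh
      rw [dq_at_neg hF hθ hh, hxm, if_pos (le_of_eq hθ.symm)]
    · filter_upwards [Ioo_mem_nhdsLT_of_mem
        (show (0:ℝ) ∈ Ioc (t - (θ:ℝ)) 0 from ⟨by linarith, le_refl _⟩)] with h hh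
      rw [dq_right hF (ne_of_lt hh.2) hθ (by rw [abs_of_neg hh.2]; linarith [hh.1]), hxm,
        if_pos (by linarith)]
  exact Tendsto.congr' (this.mono fun h hh => hh.symm) tendsto_const_nhds

end Helpers

section Helpers2
variable {F : ℝ → (Icc (0:ℝ) 1 → ℝ)} {t : ℝ}

lemma evalSeminorm_apply (j : Icc (0:ℝ) 1) (x : Icc (0:ℝ) 1 → ℝ) :
    evalSeminorm j x = |x j| := rfl

lemma evalSeminorm_continuous (j : Icc (0:ℝ) 1) : Continuous (evalSeminorm j) := by
  show Continuous fun x : Icc (0:ℝ) 1 → ℝ => |x j|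
  exact (continuous_apply j).abs

lemma pDiam_le {X : Type*} [AddCommGroup X] [Module ℝ X] {p : Seminorm ℝ X} {W : Set X}
    {c : ℝ} (H : ∀ x ∈ W, ∀ y ∈ W, p (x - y) ≤ c) : pDiam p W ≤ ENNReal.ofReal c := by
  refine iSup₂_le fun x hx => iSup₂_le fun y hy => ?_
  exact ENNReal.ofReal_le_ofReal (H x hx y hy)

lemma le_pDiam {X : Type*} [AddCommGroup X] [Module ℝ X] {p : Seminorm ℝ X} {W : Set X}
    {x y : X} (hx : x ∈ W) (hy : y ∈ W) : ENNReal.ofReal (p (x - y)) ≤ pDiam p W :=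
  le_iSup₂_of_le x hx (le_iSup₂_of_le y hy le_rfl)

lemma pDiam_pair {X : Type*} [AddCommGroup X] [Module ℝ X] (p : Seminorm ℝ X) (a b : X) :
    pDiam p ({a, b} : Set X) = ENNReal.ofReal (p (a - b)) := by
  refine le_antisymm (pDiam_le ?_) (le_pDiam (mem_insert a _) (mem_insert_of_mem a rfl))
  rintro x (rfl | rfl) y (rfl | rfl)
  · simp [apply_nonneg]
  · rfl
  · rw [← neg_sub, map_neg_eq_map]
  · simp [apply_nonneg]

lemma mem_avgRange_xp (hF : ∀ (s : ℝ) (θ : Icc (0:ℝ) 1), F s θ = min (θ : ℝ) s)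
    (ht : t ∈ Ioo (0:ℝ) 1) {xp : Icc (0:ℝ) 1 → ℝ}
    (hxp : ∀ θ : Icc (0:ℝ) 1, xp θ = if t < (θ : ℝ) then 1 else 0) :
    xp ∈ avgRange F t := by
  rw [avgRange, Set.mem_iInter₂]
  intro p hp
  rw [avgRangeP, Set.mem_iInter₂]
  intro δ hδ
  intro ε hε
  have key : Tendsto (fun h => p (diffQuot F t h - xp)) (𝓝[>] (0:ℝ)) (𝓝 0) := by
    have cont : Continuous fun x : Icc (0:ℝ) 1 → ℝ => p (x - xp) :=
      hp.comp (continuous_id.sub continuous_const)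
    have := (cont.tendsto xp).comp (tendsto_dq_pos hF ht hxp)
    simpa [Function.comp_def] using this
  have h1 : ∀ᶠ h in 𝓝[>] (0:ℝ), p (diffQuot F t h - xp) < ε :=
    key.eventually (gt_mem_nhds hε)
  have h2 : Ioo (0:ℝ) (min δ (1 - t)) ∈ 𝓝[>] (0:ℝ) :=
    Ioo_mem_nhdsGT_of_mem ⟨le_refl _, lt_min hδ (by linarith [ht.2])⟩
  obtain ⟨h, hph, hmem⟩ := (h1.and h2).exists
  refine ⟨diffQuot F t h, ⟨h, ne_of_gt hmem.1, ?_, ?_, rfl⟩, ?_⟩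
  · rw [abs_of_pos hmem.1]; exact lt_of_lt_of_le hmem.2 (min_le_left _ _)
  · constructor
    · linarith [ht.1, hmem.1]
    · have := lt_of_lt_of_le hmem.2 (min_le_right _ _); linarith
  · rwa [← neg_sub, map_neg_eq_map]

lemma mem_avgRange_xm (hF : ∀ (s : ℝ) (θ : Icc (0:ℝ) 1), F s θ = min (θ : ℝ) s)
    (ht : t ∈ Ioo (0:ℝ) 1) {xm : Icc (0:ℝ) 1 → ℝ}
    (hxm : ∀ θ : Icc (0:ℝ) 1, xm θ = if t ≤ (θ : ℝ) then 1 else 0) :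
    xm ∈ avgRange F t := by
  rw [avgRange, Set.mem_iInter₂]
  intro p hp
  rw [avgRangeP, Set.mem_iInter₂]
  intro δ hδ
  intro ε hε
  have key : Tendsto (fun h => p (diffQuot F t h - xm)) (𝓝[<] (0:ℝ)) (𝓝 0) := by
    have cont : Continuous fun x : Icc (0:ℝ) 1 → ℝ => p (x - xm) :=
      hp.comp (continuous_id.sub continuous_const)
    have := (cont.tendsto xm).comp (tendsto_dq_neg hF ht hxm)
    simpa [Function.comp_def] using this
  have h1 : ∀ᶠ h in 𝓝[<] (0:ℝ), p (diffQuot F t h - xm) < ε :=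
    key.eventually (gt_mem_nhds hε)
  have h2 : Ioo (-(min δ t)) (0:ℝ) ∈ 𝓝[<] (0:ℝ) :=
    Ioo_mem_nhdsLT_of_mem ⟨neg_lt_zero.mpr (lt_min hδ ht.1), le_refl _⟩
  obtain ⟨h, hph, hmem⟩ := (h1.and h2).exists
  have hδ' : -h < min δ t := by linarith [hmem.1]
  refine ⟨diffQuot F t h, ⟨h, ne_of_lt hmem.2, ?_, ?_, rfl⟩, ?_⟩
  · rw [abs_of_neg hmem.2]; exact lt_of_lt_of_le hδ' (min_le_left _ _)
  · constructor
    · have := lt_of_lt_of_le hδ' (min_le_right _ _); linarith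
    · linarith [ht.2, hmem.2]
  · rwa [← neg_sub, map_neg_eq_map]

/-- If for some `δ > 0` all elements of `avgSet F t δ` have `j`-coordinate `c`,
then every element of `avgRangeP (evalSeminorm j) F t` has `j`-coordinate `c`. -/
lemma coord_eq_of_const {x : Icc (0:ℝ) 1 → ℝ} {j : Icc (0:ℝ) 1} {δ c : ℝ} (hδ : 0 < δ)
    (hx : x ∈ avgRangeP (evalSeminorm j) F t)
    (hconst : ∀ y ∈ avgSet F t δ, y j = c) : x j = c := by
  rw [avgRangeP, Set.mem_iInter₂] at hx
  have hx' := hx δ hδ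
  by_contra hne
  have hpos : 0 < |x j - c| := abs_pos.mpr (sub_ne_zero.mpr hne)
  obtain ⟨y, hy, hlt⟩ := hx' _ hpos
  rw [evalSeminorm_apply] at hlt
  rw [Pi.sub_apply, hconst y hy] at hlt
  exact lt_irrefl _ hlt

end Helpers2

section Helpers3
variable {F : ℝ → (Icc (0:ℝ) 1 → ℝ)} {t : ℝ}

lemma avgSet_coord_left (hF : ∀ (s : ℝ) (θ : Icc (0:ℝ) 1), F s θ = min (θ : ℝ) s)
    {j : Icc (0:ℝ) 1} (hj : (j:ℝ) < t) {δ : ℝ} (hδ : δ ≤ t - j) :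
    ∀ y ∈ avgSet F t δ, y j = 0 := by
  rintro y ⟨h, hne, hh, -, rfl⟩
  exact dq_left hF hj (lt_of_lt_of_le hh hδ)

lemma avgSet_coord_right (hF : ∀ (s : ℝ) (θ : Icc (0:ℝ) 1), F s θ = min (θ : ℝ) s)
    {j : Icc (0:ℝ) 1} (hj : t < (j:ℝ)) {δ : ℝ} (hδ : δ ≤ (j:ℝ) - t) :
    ∀ y ∈ avgSet F t δ, y j = 1 := by
  rintro y ⟨h, hne, hh, -, rfl⟩
  exact dq_right hF hne hj (lt_of_lt_of_le hh hδ)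

lemma avgSet_coord_mid (hF : ∀ (s : ℝ) (θ : Icc (0:ℝ) 1), F s θ = min (θ : ℝ) s)
    {j : Icc (0:ℝ) 1} (hj : (j:ℝ) = t) {δ : ℝ} :
    ∀ y ∈ avgSet F t δ, y j = 0 ∨ y j = 1 := by
  rintro y ⟨h, hne, hh, -, rfl⟩
  exact dq_mem01 hF hj hne

lemma avgRange_eq (hF : ∀ (s : ℝ) (θ : Icc (0:ℝ) 1), F s θ = min (θ : ℝ) s)
    (ht : t ∈ Ioo (0:ℝ) 1) {xp xm : Icc (0:ℝ) 1 → ℝ}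
    (hxp : ∀ θ : Icc (0:ℝ) 1, xp θ = if t < (θ : ℝ) then 1 else 0)
    (hxm : ∀ θ : Icc (0:ℝ) 1, xm θ = if t ≤ (θ : ℝ) then 1 else 0) :
    avgRange F t = {xp, xm} := by
  apply Set.Subset.antisymm
  · intro x hx
    have hco : ∀ j : Icc (0:ℝ) 1, x ∈ avgRangeP (evalSeminorm j) F t := by
      rw [avgRange, Set.mem_iInter₂] at hx
      exact fun j => hx _ (evalSeminorm_continuous j)
    have hlt : ∀ j : Icc (0:ℝ) 1, (j:ℝ) < t → x j = 0 := fun j hj =>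
      coord_eq_of_const (by linarith : (0:ℝ) < t - j) (hco j)
        (avgSet_coord_left hF hj (le_refl _))
    have hgt : ∀ j : Icc (0:ℝ) 1, t < (j:ℝ) → x j = 1 := fun j hj =>
      coord_eq_of_const (by linarith : (0:ℝ) < (j:ℝ) - t) (hco j)
        (avgSet_coord_right hF hj (le_refl _))
    set jt : Icc (0:ℝ) 1 := ⟨t, ht.1.le, ht.2.le⟩ with hjt
    have hjtv : (jt:ℝ) = t := rfl
    have hmid : x jt = 0 ∨ x jt = 1 := by
      by_contra hcon
      push_neg at hcon
      set ε := min |x jt - 0| |x jt - 1| with hε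
      have hεpos : 0 < ε :=
        lt_min (abs_pos.mpr (sub_ne_zero.mpr hcon.1)) (abs_pos.mpr (sub_ne_zero.mpr hcon.2))
      have := hco jt
      rw [avgRangeP, Set.mem_iInter₂] at this
      obtain ⟨y, hy, hlt'⟩ := this 1 one_pos ε hεpos
      rw [evalSeminorm_apply, Pi.sub_apply] at hlt'
      rcases avgSet_coord_mid hF hjtv y hy with h0 | h1
      · rw [h0] at hlt'
        exact absurd hlt' (not_lt.mpr (by rw [hε]; simpa using min_le_left _ _))
      · rw [h1] at hlt'
        exact absurd hlt' (not_lt.mpr (min_le_right _ _))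
    have hcoord : ∀ j : Icc (0:ℝ) 1, (j:ℝ) = t → x j = x jt := by
      intro j hj
      congr 1
      exact Subtype.ext (by rw [hj, hjtv])
    rcases hmid with h0 | h1
    · left
      funext θ
      rcases lt_trichotomy (θ:ℝ) t with hθ | hθ | hθ
      · rw [hlt θ hθ, hxp, if_neg (by linarith)]
      · rw [hcoord θ hθ, h0, hxp, if_neg (by rw [hθ]; exact lt_irrefl t)]
      · rw [hgt θ hθ, hxp, if_pos hθ]
    · right
      funext θ
      rcases lt_trichotomy (θ:ℝ) t with hθ | hθ | hθ
      · rw [hlt θ hθ, hxm, if_neg (by linarith)]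
      · rw [hcoord θ hθ, h1, hxm, if_pos (le_of_eq hθ.symm)]
      · rw [hgt θ hθ, hxm, if_pos (le_of_lt hθ)]
  · rintro x (rfl | rfl)
    · exact mem_avgRange_xp hF ht hxp
    · exact mem_avgRange_xm hF ht hxm

end Helpers3
/-- For `F(t)(θ) = min(θ,t)` into `ℝ^[0,1]`, at every `t ∈ (0,1)` the
function `F` has the limit average range, with `A_F(t) = {x_t⁺, x_t⁻}` (the indicators of
`(t,1]` and `[t,1]`); moreover `p_t`-diameters equal `1` and `p_j`-diameters (`j ≠ t`)
vanish for small `δ`. -/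
theorem stmt9 (F : ℝ → (Icc (0:ℝ) 1 → ℝ))
    (hF : ∀ (s : ℝ) (θ : Icc (0:ℝ) 1), F s θ = min (θ : ℝ) s)
    (t : ℝ) (ht : t ∈ Ioo (0:ℝ) 1)
    (xp xm : Icc (0:ℝ) 1 → ℝ)
    (hxp : ∀ θ : Icc (0:ℝ) 1, xp θ = if t < (θ : ℝ) then 1 else 0)
    (hxm : ∀ θ : Icc (0:ℝ) 1, xm θ = if t ≤ (θ : ℝ) then 1 else 0) :
    HasLimitAvgRange F t ∧ avgRange F t = {xp, xm} ∧
      (∀ δ : ℝ, 0 < δ → Ioo (t - δ) (t + δ) ⊆ Ioo (0:ℝ) 1 →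
        pDiam (evalSeminorm ⟨t, ht.1.le, ht.2.le⟩) (avgSet F t δ) = 1 ∧
        pDiam (evalSeminorm ⟨t, ht.1.le, ht.2.le⟩) (avgRange F t) = 1) ∧
      (∀ j : Icc (0:ℝ) 1, (j : ℝ) ≠ t → ∀ δ : ℝ, 0 < δ → δ < |t - (j : ℝ)| →
        pDiam (evalSeminorm j) (avgSet F t δ) = 0 ∧
        pDiam (evalSeminorm j) (avgRange F t) = 0) := by
  have hAR := avgRange_eq hF ht hxp hxm
  have hjtv : ((⟨t, ht.1.le, ht.2.le⟩ : Icc (0:ℝ) 1) : ℝ) = t := rfl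
  have hxpxm : (evalSeminorm (⟨t, ht.1.le, ht.2.le⟩ : Icc (0:ℝ) 1)) (xp - xm) = 1 := by
    rw [evalSeminorm_apply, Pi.sub_apply, hxp, hxm, if_neg (by rw [hjtv]; exact lt_irrefl t),
      if_pos (le_of_eq hjtv.symm)]
    norm_num
  have hRangeDiamT : pDiam (evalSeminorm (⟨t, ht.1.le, ht.2.le⟩ : Icc (0:ℝ) 1))
      (avgRange F t) = 1 := by
    rw [hAR, pDiam_pair, hxpxm, ENNReal.ofReal_one]
  refine ⟨⟨?_, ?_⟩, hAR, ?_, ?_⟩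
  · -- boundedness
    rw [hAR, Set.insert_eq]
    exact (Bornology.isVonNBounded_singleton xp).union (Bornology.isVonNBounded_singleton xm)
  · -- limit average range estimate
    intro p hp ε hε
    have keyp : Tendsto (fun h => p (diffQuot F t h - xp)) (𝓝[>] (0:ℝ)) (𝓝 0) := by
      have cont : Continuous fun x : Icc (0:ℝ) 1 → ℝ => p (x - xp) :=
        hp.comp (continuous_id.sub continuous_const)
      simpa [Function.comp_def] using (cont.tendsto xp).comp (tendsto_dq_pos hF ht hxp)
    have keym : Tendsto (fun h => p (diffQuot F t h - xm)) (𝓝[<] (0:ℝ)) (𝓝 0) := by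
      have cont : Continuous fun x : Icc (0:ℝ) 1 → ℝ => p (x - xm) :=
        hp.comp (continuous_id.sub continuous_const)
      simpa [Function.comp_def] using (cont.tendsto xm).comp (tendsto_dq_neg hF ht hxm)
    have h1 : {h : ℝ | p (diffQuot F t h - xp) < ε/3} ∈ 𝓝[>] (0:ℝ) :=
      keyp.eventually (gt_mem_nhds (by linarith))
    have h2 : {h : ℝ | p (diffQuot F t h - xm) < ε/3} ∈ 𝓝[<] (0:ℝ) :=
      keym.eventually (gt_mem_nhds (by linarith))
    obtain ⟨u, hu, hIu⟩ := mem_nhdsGT_iff_exists_Ioo_subset.mp h1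
    obtain ⟨l, hl, hIl⟩ := mem_nhdsLT_iff_exists_Ioo_subset.mp h2
    rw [Set.mem_Ioi] at hu
    rw [Set.mem_Iio] at hl
    set δ := min u (-l) with hδdef
    have hδpos : 0 < δ := lt_min hu (by linarith)
    refine ⟨δ, hδpos, ?_⟩
    have near : ∀ y ∈ avgSet F t δ, ∃ a : Icc (0:ℝ) 1 → ℝ,
        (a = xp ∨ a = xm) ∧ p (y - a) < ε/3 := by
      rintro y ⟨h, hne, hh, -, rfl⟩
      rcases hne.lt_or_gt with hneg | hpos
      · refine ⟨xm, Or.inr rfl, ?_⟩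
        apply hIl
        constructor
        · rw [abs_of_neg hneg] at hh
          have : -h < -l := lt_of_lt_of_le hh (min_le_right _ _)
          linarith
        · exact hneg
      · refine ⟨xp, Or.inl rfl, ?_⟩
        apply hIu
        exact ⟨hpos, lt_of_lt_of_le (by rwa [abs_of_pos hpos] at hh) (min_le_left _ _)⟩
    have hd : pDiam p (avgSet F t δ) ≤ ENNReal.ofReal (p (xp - xm) + (ε/3 + ε/3)) := by
      apply pDiam_le
      intro x hx y hy
      obtain ⟨a, ha, hpa⟩ := near x hx
      obtain ⟨b, hb, hpb⟩ := near y hy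
      have tri : p (x - y) ≤ p (x - a) + p (a - b) + p (b - y) := by
        have : x - y = (x - a) + (a - b) + (b - y) := by abel
        rw [this]
        exact le_trans (map_add_le_add p _ _) (add_le_add_left (map_add_le_add p _ _) _)
      have hab : p (a - b) ≤ p (xp - xm) := by
        rcases ha with rfl | rfl <;> rcases hb with rfl | rfl
        · simp [apply_nonneg]
        · exact le_refl _
        · rw [← neg_sub, map_neg_eq_map]
        · simp [apply_nonneg]
      have hby : p (b - y) = p (y - b) := by rw [← neg_sub, map_neg_eq_map]
      rw [hby] at tri
      linarith
    calc pDiam p (avgSet F t δ)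
        ≤ ENNReal.ofReal (p (xp - xm) + (ε/3 + ε/3)) := hd
      _ ≤ ENNReal.ofReal (p (xp - xm)) + ENNReal.ofReal (ε/3 + ε/3) :=
          ENNReal.ofReal_add_le
      _ < ENNReal.ofReal (p (xp - xm)) + ENNReal.ofReal ε := by
          apply ENNReal.add_lt_add_left ENNReal.ofReal_ne_top
          apply (ENNReal.ofReal_lt_ofReal_iff hε).mpr
          linarith
      _ = pDiam p (avgRange F t) + ENNReal.ofReal ε := by rw [hAR, pDiam_pair]
  · -- diameters at coordinate t
    intro δ hδ hsub
    refine ⟨?_, hRangeDiamT⟩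
    apply le_antisymm
    · rw [← ENNReal.ofReal_one]
      apply pDiam_le
      intro x hx y hy
      rw [evalSeminorm_apply, Pi.sub_apply]
      rcases avgSet_coord_mid hF hjtv x hx with h0 | h0 <;>
        rcases avgSet_coord_mid hF hjtv y hy with h1 | h1 <;>
        rw [h0, h1] <;> norm_num
    · have hmem1 : diffQuot F t (δ/2) ∈ avgSet F t δ := by
        refine ⟨δ/2, by positivity, by rw [abs_of_pos (by positivity)]; linarith, ?_, rfl⟩
        have : t + δ/2 ∈ Ioo (t - δ) (t + δ) := by constructor <;> linarith
        have h01 := hsub this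
        exact ⟨h01.1.le, h01.2.le⟩
      have hmem2 : diffQuot F t (-(δ/2)) ∈ avgSet F t δ := by
        refine ⟨-(δ/2), by simp; positivity, by rw [abs_neg, abs_of_pos (by positivity)]; linarith,
          ?_, rfl⟩
        have : t + -(δ/2) ∈ Ioo (t - δ) (t + δ) := by constructor <;> linarith
        have h01 := hsub this
        exact ⟨h01.1.le, h01.2.le⟩
      have := le_pDiam (p := evalSeminorm (⟨t, ht.1.le, ht.2.le⟩ : Icc (0:ℝ) 1)) hmem1 hmem2
      rw [evalSeminorm_apply, Pi.sub_apply,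
        dq_at_pos hF hjtv (by positivity), dq_at_neg hF hjtv (by linarith)] at this
      norm_num at this
      exact this
  · -- diameters at coordinates j ≠ t
    intro j hjne δ hδ hδlt
    have hcases : (j:ℝ) < t ∨ t < (j:ℝ) := hjne.lt_or_gt
    have hconst : ∃ c : ℝ, (∀ y ∈ avgSet F t δ, y j = c) ∧ xp j = c ∧ xm j = c := by
      rcases hcases with hj | hj
      · refine ⟨0, avgSet_coord_left hF hj ?_, ?_, ?_⟩
        · rw [abs_of_pos (by linarith)] at hδlt; linarith
        · rw [hxp, if_neg (by linarith)]
        · rw [hxm, if_neg (by linarith)]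
      · refine ⟨1, avgSet_coord_right hF hj ?_, ?_, ?_⟩
        · rw [abs_of_neg (by linarith)] at hδlt; linarith
        · rw [hxp, if_pos hj]
        · rw [hxm, if_pos hj.le]
    obtain ⟨c, hc, hcp, hcm⟩ := hconst
    constructor
    · apply le_antisymm _ zero_le
      have : pDiam (evalSeminorm j) (avgSet F t δ) ≤ ENNReal.ofReal 0 := by
        apply pDiam_le
        intro x hx y hy
        rw [evalSeminorm_apply, Pi.sub_apply, hc x hx, hc y hy, sub_self, abs_zero]
      simpa using this
    · rw [hAR, pDiam_pair, evalSeminorm_apply, Pi.sub_apply, hcp, hcm, sub_self, abs_zero,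
        ENNReal.ofReal_zero]

end
end

section
/- Let X = ℝ^[0,1] with the product topology, and define F : [0,1] → X by F(t)(θ) = min(θ, t). Define f₁, f₂ : [0,1] → X by f₁(t) = indicator function of (t,1] and f₂(t) = indicator function of [t,1]. Then f₁ and f₂ are both integrable by seminorms on [0,1], and both have primitive F: for every closed subinterval [u,v] ⊆ [0,1], F(v) − F(u) = ∫_{[u,v]} f₁ dλ = ∫_{[u,v]} f₂ dλ. -/
open MeasureTheory Set Filter Topology ENNReal

noncomputable section

variable {X : Type*}

variable {Y : Type*}

section Aux

local notation "XX" => (Icc (0:ℝ) 1 → ℝ)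

/-- A continuous seminorm on `ℝ^[0,1]` vanishes on vectors vanishing on some finite
coordinate set. -/
lemma aux_seminorm_finset (p : Seminorm ℝ XX) (hp : Continuous p) :
    ∃ s : Finset (Icc (0:ℝ) 1), ∀ x : XX, (∀ θ ∈ s, x θ = 0) → p x = 0 := by
  have h0 : p ⁻¹' (Iio 1) ∈ 𝓝 (0 : XX) :=
    hp.continuousAt.preimage_mem_nhds (Iio_mem_nhds (by simp [map_zero]))
  rw [nhds_pi, Filter.mem_pi'] at h0
  obtain ⟨I, t, ht, hsub⟩ := h0
  refine ⟨I, fun x hx => ?_⟩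
  by_contra hne
  have hpos : 0 < p x := lt_of_le_of_ne (apply_nonneg p x) (Ne.symm hne)
  set c : ℝ := 2 / p x with hc
  have hcpos : 0 < c := by positivity
  have hcx : c • x ∈ Set.pi ↑I t := by
    intro θ hθ
    have hx0 : x θ = 0 := hx θ (by simpa using hθ)
    simp only [Pi.smul_apply, hx0, smul_eq_mul, mul_zero]
    exact mem_of_mem_nhds (ht θ)
  have h1 : p (c • x) < 1 := hsub hcx
  have h2 : p (c • x) = 2 := by
    rw [map_smul_eq_mul, Real.norm_eq_abs, abs_of_pos hcpos, hc]
    field_simp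
  linarith

/-- The `θ`-coordinate of the simple integral, when the `θ`-coordinate of `g` is the
indicator of a set `A`. -/
lemma aux_simpleIntegral_coord (g : ℝ → XX) (hg : IsSimple g)
    (E : Set ℝ) (hE : MeasurableSet E) (hEfin : volume E ≠ ⊤) (θ : Icc (0:ℝ) 1)
    (A : Set ℝ) (hA1 : ∀ t ∈ A, g t θ = 1) (hA0 : ∀ t, t ∉ A → g t θ = 0) :
    simpleIntegral g E θ = (volume (E ∩ A)).toReal := by
  classical
  obtain ⟨hfin, hmeas⟩ := hg
  rw [simpleIntegral, dif_pos hfin, Finset.sum_apply]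
  simp only [Pi.smul_apply, smul_eq_mul]
  have hval : ∀ x ∈ hfin.toFinset, x θ = 1 ∨ x θ = 0 := by
    intro x hx
    rw [Set.Finite.mem_toFinset] at hx
    obtain ⟨t, rfl⟩ := hx
    by_cases ht : t ∈ A
    · exact Or.inl (hA1 t ht)
    · exact Or.inr (hA0 t ht)
  have key : E ∩ A = ⋃ x ∈ hfin.toFinset.filter (fun x => x θ = 1), E ∩ g ⁻¹' {x} := by
    ext t
    simp only [Set.mem_inter_iff, Set.mem_iUnion, Finset.mem_filter, Set.Finite.mem_toFinset,
      Set.mem_preimage, Set.mem_singleton_iff, exists_prop]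
    constructor
    · rintro ⟨htE, htA⟩
      exact ⟨g t, ⟨Set.mem_range_self t, hA1 t htA⟩, htE, rfl⟩
    · rintro ⟨x, ⟨-, hx1⟩, htE, rfl⟩
      refine ⟨htE, ?_⟩
      by_contra htA
      rw [hA0 t htA] at hx1
      norm_num at hx1
  rw [key, measure_biUnion_finset]
  · rw [ENNReal.toReal_sum]
    · rw [Finset.sum_filter]
      apply Finset.sum_congr rfl
      intro x hx
      rcases hval x hx with h1 | h0
      · rw [if_pos h1, h1, mul_one]
      · rw [if_neg (by rw [h0]; norm_num), h0, mul_zero]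
    · intro x _
      exact ne_top_of_le_ne_top hEfin (measure_mono Set.inter_subset_left)
  · intro x _ y _ hxy
    apply Set.disjoint_left.mpr
    rintro u ⟨-, hu⟩ ⟨-, hu'⟩
    simp only [Set.mem_preimage, Set.mem_singleton_iff] at hu hu'
    exact hxy (hu ▸ hu' ▸ rfl)
  · intro x _
    exact hE.inter (hmeas x)

lemma aux_isSimple_comp (r : ℝ → ℝ) (hr : Monotone r) (hfin : (Set.range r).Finite)
    (φ : ℝ → XX) : IsSimple (φ ∘ r) := by
  constructor
  · exact (hfin.image φ).subset (by rw [Set.range_comp])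
  · intro x
    have heq : (φ ∘ r) ⁻¹' {x} = r ⁻¹' (Set.range r ∩ φ ⁻¹' {x}) := by
      ext t
      simp [Set.mem_preimage, Set.mem_range_self]
    rw [heq]
    exact hr.measurable ((hfin.inter_of_left _).measurableSet)

/-- `F` is a primitive and the approximants are exact: integrability by seminorms. -/
lemma aux_hasIntegral (f : ℝ → XX) (ν : Set ℝ → XX)
    (h : ∀ p : Seminorm ℝ XX, Continuous p →
      ∃ g : ℝ → XX, IsSimple g ∧ (∀ t, p (g t - f t) = 0) ∧
        ∀ E : Set ℝ, MeasurableSet E → E ⊆ Icc (0:ℝ) 1 →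
          p (simpleIntegral g E - ν E) = 0) :
    HasIntegralBySeminorms f ν := by
  intro p hp
  obtain ⟨g, hg, hgt, hgE⟩ := h p hp
  refine ⟨fun _ => g, fun _ => hg, ⟨∅, measure_empty, fun t _ _ => ?_⟩, fun k => ?_, ?_, fun E hE hE1 => ?_⟩
  · simpa [hgt t] using (tendsto_const_nhds : Tendsto (fun _ : ℕ => (0:ℝ)) atTop (𝓝 0))
  · have heq : (fun t => p (g t - f t)) = fun _ => (0:ℝ) := funext fun t => hgt t
    rw [heq]
    exact integrable_zero _ _ _
  · have heq : (fun _ : ℕ => ∫ t in Icc (0:ℝ) 1, p (g t - f t)) = fun _ => (0:ℝ) := by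
      funext k
      simp only [hgt, integral_zero]
    rw [heq]
    exact tendsto_const_nhds
  · simpa [hgE E hE hE1] using (tendsto_const_nhds : Tendsto (fun _ : ℕ => (0:ℝ)) atTop (𝓝 0))

/-- Rounding down to a finite grid, compatible with strict inequalities against
grid points. -/
lemma aux_round_lt (s : Finset (Icc (0:ℝ) 1)) :
    ∃ r : ℝ → ℝ, Monotone r ∧ (Set.range r).Finite ∧
      ∀ (t : ℝ) (θ : Icc (0:ℝ) 1), θ ∈ s → ((r t < θ) ↔ (t < θ)) := by
  classical
  obtain ⟨T, hTmem⟩ : ∃ T : Finset ℝ, ∀ a : ℝ, a ∈ T ↔ ∃ θ ∈ s, (θ:ℝ) = a :=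
    ⟨s.image (fun θ => (θ:ℝ)), by intro a; simp⟩
  refine ⟨fun t => (insert (-1:ℝ) (T.filter (fun a => a ≤ t))).max'
      (Finset.insert_nonempty _ _), ?_, ?_, ?_⟩
  · intro t t' htt'
    apply Finset.max'_le
    intro a ha
    apply Finset.le_max'
    rcases Finset.mem_insert.mp ha with h | h
    · rw [h]; exact Finset.mem_insert_self _ _
    · rw [Finset.mem_filter] at h
      exact Finset.mem_insert_of_mem (Finset.mem_filter.mpr ⟨h.1, h.2.trans htt'⟩)
  · apply Set.Finite.subset (Finset.finite_toSet (insert (-1:ℝ) T))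
    rintro _ ⟨t, rfl⟩
    dsimp only
    have hm := Finset.max'_mem (insert (-1:ℝ) (T.filter (fun a => a ≤ t)))
      (Finset.insert_nonempty _ _)
    rcases Finset.mem_insert.mp hm with h | h
    · rw [h]; exact Finset.mem_insert_self _ _
    · exact Finset.mem_coe.mpr (Finset.mem_insert_of_mem (Finset.mem_filter.mp h).1)
  · intro t θ hθ
    dsimp only
    constructor
    · intro h
      by_contra h'
      push_neg at h'
      have hmem : (θ:ℝ) ∈ insert (-1:ℝ) (T.filter (fun a => a ≤ t)) :=
        Finset.mem_insert_of_mem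
          (Finset.mem_filter.mpr ⟨(hTmem _).mpr ⟨θ, hθ, rfl⟩, h'⟩)
      exact absurd (Finset.le_max' _ _ hmem) (not_le.mpr h)
    · intro h
      rw [Finset.max'_lt_iff]
      intro a ha
      rcases Finset.mem_insert.mp ha with h1 | h1
      · have := θ.2.1; rw [h1]; linarith
      · have := (Finset.mem_filter.mp h1).2; linarith

/-- Rounding up to a finite grid, compatible with non-strict inequalities against
grid points. -/
lemma aux_round_le (s : Finset (Icc (0:ℝ) 1)) :
    ∃ r : ℝ → ℝ, Monotone r ∧ (Set.range r).Finite ∧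
      ∀ (t : ℝ) (θ : Icc (0:ℝ) 1), θ ∈ s → ((r t ≤ θ) ↔ (t ≤ θ)) := by
  classical
  obtain ⟨T, hTmem⟩ : ∃ T : Finset ℝ, ∀ a : ℝ, a ∈ T ↔ ∃ θ ∈ s, (θ:ℝ) = a :=
    ⟨s.image (fun θ => (θ:ℝ)), by intro a; simp⟩
  refine ⟨fun t => (insert (2:ℝ) (T.filter (fun a => t ≤ a))).min'
      (Finset.insert_nonempty _ _), ?_, ?_, ?_⟩
  · intro t t' htt'
    apply Finset.le_min'
    intro a ha
    apply Finset.min'_le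
    rcases Finset.mem_insert.mp ha with h | h
    · rw [h]; exact Finset.mem_insert_self _ _
    · rw [Finset.mem_filter] at h
      exact Finset.mem_insert_of_mem (Finset.mem_filter.mpr ⟨h.1, htt'.trans h.2⟩)
  · apply Set.Finite.subset (Finset.finite_toSet (insert (2:ℝ) T))
    rintro _ ⟨t, rfl⟩
    dsimp only
    have hm := Finset.min'_mem (insert (2:ℝ) (T.filter (fun a => t ≤ a)))
      (Finset.insert_nonempty _ _)
    rcases Finset.mem_insert.mp hm with h | h
    · rw [h]; exact Finset.mem_insert_self _ _
    · exact Finset.mem_coe.mpr (Finset.mem_insert_of_mem (Finset.mem_filter.mp h).1)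
  · intro t θ hθ
    dsimp only
    constructor
    · intro h
      have hm := Finset.min'_mem (insert (2:ℝ) (T.filter (fun a => t ≤ a)))
        (Finset.insert_nonempty _ _)
      rcases Finset.mem_insert.mp hm with h1 | h1
      · have := θ.2.2; rw [h1] at h; linarith
      · exact le_trans (Finset.mem_filter.mp h1).2 h
    · intro h
      exact Finset.min'_le _ _
        (Finset.mem_insert_of_mem
          (Finset.mem_filter.mpr ⟨(hTmem _).mpr ⟨θ, hθ, rfl⟩, h⟩))

lemma aux_vol_Iic (E : Set ℝ) (a : ℝ) : volume (E ∩ Iic a) = volume (E ∩ Iio a) := by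
  have heq : E ∩ Iic a = (E ∩ Iio a) ∪ (E ∩ {a}) := by
    ext t
    simp only [Set.mem_inter_iff, Set.mem_Iic, Set.mem_Iio, Set.mem_union,
      Set.mem_singleton_iff]
    constructor
    · rintro ⟨h1, h2⟩
      rcases lt_or_eq_of_le h2 with h | h
      · exact Or.inl ⟨h1, h⟩
      · exact Or.inr ⟨h1, h⟩
    · rintro (⟨h1, h2⟩ | ⟨h1, h2⟩)
      · exact ⟨h1, le_of_lt h2⟩
      · exact ⟨h1, le_of_eq h2⟩
  rw [heq]
  have hnull : volume (E ∩ {a}) = 0 :=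
    measure_mono_null Set.inter_subset_right Real.volume_singleton
  refine le_antisymm ?_ (measure_mono Set.subset_union_left)
  calc volume (E ∩ Iio a ∪ E ∩ {a}) ≤ volume (E ∩ Iio a) + volume (E ∩ {a}) :=
        measure_union_le _ _
    _ = volume (E ∩ Iio a) := by rw [hnull, add_zero]

lemma aux_primitive (F : ℝ → XX) (hF : ∀ (t : ℝ) (θ : Icc (0:ℝ) 1), F t θ = min (θ : ℝ) t)
    (u v : ℝ) (hu : 0 ≤ u) (huv : u < v) (hv : v ≤ 1) :
    F v - F u = fun θ : Icc (0:ℝ) 1 => (volume (Icc u v ∩ Iio (θ:ℝ))).toReal := by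
  funext θ
  simp only [Pi.sub_apply, hF]
  rcases le_or_gt (θ:ℝ) u with h | h
  · have hemp : Icc u v ∩ Iio (θ:ℝ) = ∅ := by
      ext t
      simp only [Set.mem_inter_iff, Set.mem_Icc, Set.mem_Iio, Set.mem_empty_iff_false,
        iff_false, not_and]
      rintro ⟨h1, h2⟩ h3
      linarith
    rw [hemp, min_eq_left h, min_eq_left (by linarith)]
    simp
  · rcases le_or_gt (θ:ℝ) v with h2 | h2
    · have hico : Icc u v ∩ Iio (θ:ℝ) = Ico u (θ:ℝ) := by
        ext t
        simp only [Set.mem_inter_iff, Set.mem_Icc, Set.mem_Iio, Set.mem_Ico]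
        constructor
        · rintro ⟨⟨ha, hb⟩, hc⟩; exact ⟨ha, hc⟩
        · rintro ⟨ha, hb⟩; exact ⟨⟨ha, by linarith⟩, hb⟩
      rw [hico, Real.volume_Ico, ENNReal.toReal_ofReal (by linarith),
        min_eq_left h2, min_eq_right (le_of_lt h)]
    · have hicc : Icc u v ∩ Iio (θ:ℝ) = Icc u v :=
        Set.inter_eq_self_of_subset_left fun t ht => lt_of_le_of_lt ht.2 h2
      rw [hicc, Real.volume_Icc, ENNReal.toReal_ofReal (by linarith),
        min_eq_right (le_of_lt h2), min_eq_right (le_of_lt h)]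

end Aux

/-- For `F(t)(θ) = min(θ,t)` into `ℝ^[0,1]`, the functions
`f₁(t) = 𝟙_{(t,1]}` and `f₂(t) = 𝟙_{[t,1]}` are integrable by seminorms with
primitive `F`. -/
theorem stmt10 (F f₁ f₂ : ℝ → (Icc (0:ℝ) 1 → ℝ))
    (hF : ∀ (t : ℝ) (θ : Icc (0:ℝ) 1), F t θ = min (θ : ℝ) t)
    (hf₁ : ∀ (t : ℝ) (θ : Icc (0:ℝ) 1), f₁ t θ = if t < (θ : ℝ) then 1 else 0)
    (hf₂ : ∀ (t : ℝ) (θ : Icc (0:ℝ) 1), f₂ t θ = if t ≤ (θ : ℝ) then 1 else 0) :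
    (∃ ν : Set ℝ → (Icc (0:ℝ) 1 → ℝ), HasIntegralBySeminorms f₁ ν ∧
        ∀ u v : ℝ, 0 ≤ u → u < v → v ≤ 1 → F v - F u = ν (Icc u v)) ∧
      (∃ ν : Set ℝ → (Icc (0:ℝ) 1 → ℝ), HasIntegralBySeminorms f₂ ν ∧
        ∀ u v : ℝ, 0 ≤ u → u < v → v ≤ 1 → F v - F u = ν (Icc u v)) := by
  have hvolIcc : volume (Icc (0:ℝ) 1) ≠ ⊤ := by
    rw [Real.volume_Icc]; exact ENNReal.ofReal_ne_top
  constructor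
  · refine ⟨fun E => fun θ => (volume (E ∩ Iio (θ:ℝ))).toReal, ?_, ?_⟩
    · apply aux_hasIntegral
      intro p hp
      obtain ⟨s, hs⟩ := aux_seminorm_finset p hp
      obtain ⟨r, hrmono, hrfin, hr⟩ := aux_round_lt s
      refine ⟨f₁ ∘ r, aux_isSimple_comp r hrmono hrfin f₁, ?_, ?_⟩
      · intro t
        apply hs
        intro θ hθ
        have hco : f₁ (r t) θ = f₁ t θ := by
          rw [hf₁, hf₁]; exact if_congr (hr t θ hθ) rfl rfl
        simp [Pi.sub_apply, Function.comp_apply, hco]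
      · intro E hE hE1
        apply hs
        intro θ hθ
        have hEfin : volume E ≠ ⊤ := ne_top_of_le_ne_top hvolIcc (measure_mono hE1)
        have hco := aux_simpleIntegral_coord (f₁ ∘ r) (aux_isSimple_comp r hrmono hrfin f₁)
          E hE hEfin θ (Iio (θ:ℝ))
          (fun t ht => by rw [Function.comp_apply, hf₁]; exact if_pos ((hr t θ hθ).mpr ht))
          (fun t ht => by
            rw [Function.comp_apply, hf₁]
            exact if_neg (fun hc => ht ((hr t θ hθ).mp hc)))
        simp only [Pi.sub_apply, hco]
        exact sub_self _
    · intro u v hu huv hv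
      exact aux_primitive F hF u v hu huv hv
  · refine ⟨fun E => fun θ => (volume (E ∩ Iio (θ:ℝ))).toReal, ?_, ?_⟩
    · apply aux_hasIntegral
      intro p hp
      obtain ⟨s, hs⟩ := aux_seminorm_finset p hp
      obtain ⟨r, hrmono, hrfin, hr⟩ := aux_round_le s
      refine ⟨f₂ ∘ r, aux_isSimple_comp r hrmono hrfin f₂, ?_, ?_⟩
      · intro t
        apply hs
        intro θ hθ
        have hco : f₂ (r t) θ = f₂ t θ := by
          rw [hf₂, hf₂]; exact if_congr (hr t θ hθ) rfl rfl
        simp [Pi.sub_apply, Function.comp_apply, hco]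
      · intro E hE hE1
        apply hs
        intro θ hθ
        have hEfin : volume E ≠ ⊤ := ne_top_of_le_ne_top hvolIcc (measure_mono hE1)
        have hco := aux_simpleIntegral_coord (f₂ ∘ r) (aux_isSimple_comp r hrmono hrfin f₂)
          E hE hEfin θ (Iic (θ:ℝ))
          (fun t ht => by rw [Function.comp_apply, hf₂]; exact if_pos ((hr t θ hθ).mpr ht))
          (fun t ht => by
            rw [Function.comp_apply, hf₂]
            exact if_neg (fun hc => ht ((hr t θ hθ).mp hc)))
        simp only [Pi.sub_apply, hco, aux_vol_Iic]
        exact sub_self _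
    · intro u v hu huv hv
      exact aux_primitive F hF u v hu huv hv

end
end

section
/- Let Y be a Banach space and g : [0,1] → Y. If g is strongly absolutely continuous and has the limit average range at almost every t ∈ [0,1] (with respect to Lebesgue measure), then g is differentiable at almost every t ∈ [0,1]. -/
open MeasureTheory Set Filter Topology ENNReal

noncomputable section

variable {X : Type*}

variable {Y : Type*}

/-! ### Auxiliary lemmas for Statement 13 -/

section Stmt13Aux

set_option linter.unusedSectionVars false

lemma stronglyACN_single [NormedAddCommGroup Y] {g : ℝ → Y} (h : StronglyACN g)
    {ε : ℝ} (hε : 0 < ε) :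
    ∃ η > (0:ℝ), ∀ u v : ℝ, 0 ≤ u → u < v → v ≤ 1 → v - u < η → ‖g v - g u‖ < ε := by
  obtain ⟨η, hη, H⟩ := h ε hε
  refine ⟨η, hη, fun u v h0 huv h1 hlen => ?_⟩
  have := H 1 (fun _ => u) (fun _ => v) (fun _ => ⟨h0, huv, h1⟩)
    (fun i j hij => absurd (Subsingleton.elim i j) hij) (by simpa using hlen)
  simpa using this

lemma sAC_continuousOn [NormedAddCommGroup Y] {g : ℝ → Y} (h : StronglyACN g) :
    ContinuousOn g (Icc 0 1) := by
  rw [Metric.continuousOn_iff]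
  intro t ht ε hε
  obtain ⟨η, hη, H⟩ := stronglyACN_single h hε
  refine ⟨η, hη, fun s hs hd => ?_⟩
  rw [Real.dist_eq] at hd
  rcases lt_trichotomy s t with hlt | rfl | hlt
  · have := H s t hs.1 hlt ht.2 (by rw [abs_of_neg (by linarith)] at hd; linarith)
    rw [dist_eq_norm, norm_sub_rev]
    exact this
  · simpa using hε
  · have := H t s ht.1 hlt hs.2 (by rw [abs_of_pos (by linarith)] at hd; linarith)
    rw [dist_eq_norm]
    exact this

lemma evar_le_one [NormedAddCommGroup Y] {g : ℝ → Y} {η : ℝ}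
    (H : ∀ (n : ℕ) (u v : Fin n → ℝ), (∀ j, 0 ≤ u j ∧ u j < v j ∧ v j ≤ 1) →
      (∀ i j, i ≠ j → v i ≤ u j ∨ v j ≤ u i) → (∑ j, (v j - u j)) < η →
      (∑ j, ‖g (v j) - g (u j)‖) < 1)
    {a b : ℝ} (ha : 0 ≤ a) (hb : b ≤ 1) (hlen : b - a < η) :
    eVariationOn g (Icc a b) ≤ 1 := by
  apply iSup_le
  rintro ⟨n, u, hu, us⟩
  classical
  set P : Finset ℕ := (Finset.range n).filter (fun i => u i < u (i + 1)) with hP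
  have hPsub : P ⊆ Finset.range n := Finset.filter_subset _ _
  have hsum_eq : ∑ i ∈ Finset.range n, edist (g (u (i+1))) (g (u i))
      = ∑ i ∈ P, edist (g (u (i+1))) (g (u i)) := by
    refine (Finset.sum_subset hPsub ?_).symm
    intro i hi hiP
    have h2 : ¬ u i < u (i+1) := by simpa [hP, hi] using hiP
    rw [le_antisymm (not_lt.1 h2) (hu (Nat.le_succ i)), edist_self]
  have hPF : ∀ {M : Type} [AddCommMonoid M] (F : ℕ → M),
      ∑ i ∈ P, F i = ∑ k : Fin P.card, F ((P.equivFin.symm k : ℕ)) := by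
    intro M _ F
    rw [← Finset.sum_coe_sort P F]
    exact (Equiv.sum_comp P.equivFin.symm (fun x : P => F x)).symm
  set U : Fin P.card → ℝ := fun k => u ((P.equivFin.symm k : ℕ))
  set V : Fin P.card → ℝ := fun k => u ((P.equivFin.symm k : ℕ) + 1)
  have hmemP : ∀ k, ((P.equivFin.symm k : ℕ)) ∈ P := fun k => (P.equivFin.symm k).2
  have hUV : ∀ j, 0 ≤ U j ∧ U j < V j ∧ V j ≤ 1 := by
    intro j
    have h1 := (us ((P.equivFin.symm j : ℕ)))
    have h2 := (us ((P.equivFin.symm j : ℕ) + 1))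
    have h3 := (Finset.mem_filter.1 (hmemP j)).2
    exact ⟨ha.trans h1.1, h3, h2.2.trans hb⟩
  have hnov : ∀ i j, i ≠ j → V i ≤ U j ∨ V j ≤ U i := by
    intro i j hij
    have hne : ((P.equivFin.symm i : ℕ)) ≠ ((P.equivFin.symm j : ℕ)) := by
      intro hc
      exact hij (by simpa using P.equivFin.symm.injective (Subtype.ext hc))
    rcases lt_or_gt_of_ne hne with hlt | hlt
    · exact Or.inl (hu hlt)
    · exact Or.inr (hu hlt)
  have hlensum : (∑ j, (V j - U j)) < η := by
    have e1 : (∑ j, (V j - U j)) = ∑ i ∈ P, (u (i+1) - u i) := by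
      simp only [U, V]; exact (hPF (fun i => u (i+1) - u i)).symm
    have e2 : ∑ i ∈ P, (u (i+1) - u i) ≤ ∑ i ∈ Finset.range n, (u (i+1) - u i) :=
      Finset.sum_le_sum_of_subset_of_nonneg hPsub
        (fun i _ _ => sub_nonneg.2 (hu (Nat.le_succ i)))
    rw [Finset.sum_range_sub u] at e2
    have e3 : u n - u 0 ≤ b - a := sub_le_sub (us n).2 (us 0).1
    calc (∑ j, (V j - U j)) = _ := e1
    _ ≤ u n - u 0 := e2
    _ ≤ b - a := e3
    _ < η := hlen
  have key := H P.card U V hUV hnov hlensum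
  rw [hsum_eq, hPF]
  have hed : ∀ k : Fin P.card,
      edist (g (u ((P.equivFin.symm k : ℕ) + 1))) (g (u ((P.equivFin.symm k : ℕ))))
      = ENNReal.ofReal ‖g (V k) - g (U k)‖ := by
    intro k
    rw [edist_dist, dist_eq_norm]
  rw [Finset.sum_congr rfl (fun k _ => hed k), ← ENNReal.ofReal_sum_of_nonneg
    (fun k _ => norm_nonneg _)]
  calc ENNReal.ofReal (∑ k, ‖g (V k) - g (U k)‖) ≤ ENNReal.ofReal 1 :=
    ENNReal.ofReal_le_ofReal key.le
  _ = 1 := ENNReal.ofReal_one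

lemma sAC_bv [NormedAddCommGroup Y] {g : ℝ → Y} {η : ℝ} (hη : 0 < η)
    (hchunk : ∀ {a b : ℝ}, 0 ≤ a → b ≤ 1 → b - a < η → eVariationOn g (Icc a b) ≤ 1) :
    BoundedVariationOn g (Icc 0 1) := by
  obtain ⟨N, hN⟩ := exists_nat_gt (1 / η)
  have hN0 : 0 < (N:ℝ) := lt_trans (by positivity) hN
  have hstepN : (1:ℝ)/N < η := by
    rw [div_lt_iff₀ hN0]
    rw [div_lt_iff₀ hη] at hN
    linarith [hN]
  have hstep : ∀ k : ℕ, k ≤ N → eVariationOn g (Icc 0 ((k:ℝ)/N)) ≤ (k : ℝ≥0∞) := by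
    intro k
    induction k with
    | zero =>
      intro _
      simp only [Nat.cast_zero, zero_div, Set.Icc_self]
      rw [eVariationOn.subsingleton g (by simp : Set.Subsingleton {(0:ℝ)})]
    | succ k ih =>
      intro hk1
      have hk : k ≤ N := Nat.le_of_succ_le hk1
      have h1 : (0:ℝ) ≤ (k:ℝ)/N := by positivity
      have h2 : (k:ℝ)/N ≤ ((k+1:ℕ):ℝ)/N := by gcongr; simp
      have hadd := eVariationOn.Icc_add_Icc g (s := (univ : Set ℝ)) h1 h2 (mem_univ _)
      simp only [univ_inter] at hadd
      have hb1 : ((k+1:ℕ):ℝ)/N ≤ 1 := by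
        rw [div_le_one hN0]; exact_mod_cast hk1
      have hlen : ((k+1:ℕ):ℝ)/N - (k:ℝ)/N < η := by
        have he : ((k+1:ℕ):ℝ)/N - (k:ℝ)/N = 1/N := by push_cast; ring
        rw [he]; exact hstepN
      have hsecond := hchunk h1 hb1 hlen
      calc eVariationOn g (Icc 0 (((k+1:ℕ):ℝ)/N))
          = eVariationOn g (Icc 0 ((k:ℝ)/N)) + eVariationOn g (Icc ((k:ℝ)/N) (((k+1:ℕ):ℝ)/N)) :=
            hadd.symm
        _ ≤ (k : ℝ≥0∞) + 1 := add_le_add (ih hk) hsecond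
        _ = ((k+1:ℕ) : ℝ≥0∞) := by push_cast; ring
  have hfin : eVariationOn g (Icc 0 1) ≤ (N : ℝ≥0∞) := by
    have := hstep N le_rfl
    rwa [div_self hN0.ne'] at this
  exact ne_top_of_le_ne_top (ENNReal.natCast_ne_top N) hfin

lemma avgRange_sep [NormedAddCommGroup Y] [NormedSpace ℝ Y] {g : ℝ → Y}
    (hg : ContinuousOn g (Icc 0 1)) :
    ∃ c : Set Y, c.Countable ∧ ∀ t ∈ Icc (0:ℝ) 1, ∀ x ∈ avgRangeN g t, ∀ y ∈ avgRangeN g t,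
      y - x ∈ closure c := by
  have hT : TopologicalSpace.IsSeparable (g '' Icc 0 1) :=
    (isCompact_Icc.image_of_continuousOn hg).isSeparable
  have hW : TopologicalSpace.IsSeparable
      ((fun p : ℝ × Y × Y => p.1 • (p.2.1 - p.2.2)) ''
        (univ ×ˢ (g '' Icc 0 1) ×ˢ (g '' Icc 0 1))) := by
    apply TopologicalSpace.IsSeparable.image
    · exact (TopologicalSpace.isSeparable_univ_iff.2 (by infer_instance)).prod (hT.prod hT)
    · fun_prop
  set W := (fun p : ℝ × Y × Y => p.1 • (p.2.1 - p.2.2)) ''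
    (univ ×ˢ (g '' Icc 0 1) ×ˢ (g '' Icc 0 1)) with hWdef
  have hZ : TopologicalSpace.IsSeparable
      ((fun p : Y × Y => p.1 - p.2) '' ((closure W) ×ˢ (closure W))) := by
    apply TopologicalSpace.IsSeparable.image
    · exact (hW.closure.prod hW.closure)
    · fun_prop
  obtain ⟨c, hc, hZc⟩ := hZ
  refine ⟨c, hc, fun t ht x hx y hy => ?_⟩
  have hsub : ∀ z ∈ avgRangeN g t, z ∈ closure W := by
    intro z hz
    have h1 : z ∈ closure (avgSet g t 1) := mem_iInter₂.1 hz 1 one_pos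
    refine closure_mono ?_ h1
    rintro w ⟨h, hne, hlt, hIcc, rfl⟩
    exact ⟨(h⁻¹, g (t+h), g t), ⟨mem_univ _, ⟨_, hIcc, rfl⟩, ⟨_, ht, rfl⟩⟩, rfl⟩
  exact hZc ⟨(y, x), ⟨hsub y hy, hsub x hx⟩, rfl⟩

lemma avgRange_ell_eq [NormedAddCommGroup Y] [NormedSpace ℝ Y] {g : ℝ → Y} {t : ℝ} {x : Y}
    (hx : x ∈ avgRangeN g t) (ℓ : Y →L[ℝ] ℝ) {d : ℝ}
    (hd : Tendsto (slope (fun s => ℓ (g s)) t) (𝓝[Icc (0:ℝ) 1 \ {t}] t) (𝓝 d)) :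
    ℓ x = d := by
  have hmem : ∀ n : ℕ, ∃ h : ℝ, h ≠ 0 ∧ |h| < 1/(n+1) ∧ t + h ∈ Icc (0:ℝ) 1 ∧
      dist x (diffQuot g t h) < 1/(n+1) := by
    intro n
    have hpos : (0:ℝ) < 1/(n+1) := by positivity
    have h1 : x ∈ closure (avgSet g t (1/(n+1))) := mem_iInter₂.1 hx _ hpos
    obtain ⟨p, hp, hdist⟩ := Metric.mem_closure_iff.1 h1 _ hpos
    obtain ⟨h, hne, hlt, hIcc, rfl⟩ := hp
    exact ⟨h, hne, hlt, hIcc, hdist⟩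
  choose h hne hlt hIcc hdist using hmem
  have hbound : Tendsto (fun n : ℕ => 1/((n:ℝ)+1)) atTop (𝓝 0) :=
    tendsto_one_div_add_atTop_nhds_zero_nat
  have hh0 : Tendsto h atTop (𝓝 0) :=
    squeeze_zero_norm (fun n => (hlt n).le) hbound
  have hseq : Tendsto (fun n => t + h n) atTop (𝓝[Icc (0:ℝ) 1 \ {t}] t) := by
    rw [tendsto_nhdsWithin_iff]
    constructor
    · have := tendsto_const_nhds (x := t) (f := atTop (α := ℕ)) |>.add hh0
      simpa using this
    · refine Eventually.of_forall (fun n => ⟨hIcc n, ?_⟩)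
      simp only [mem_singleton_iff]
      intro hc
      exact hne n (by linarith [hc])
  have hA : Tendsto (fun n => slope (fun s => ℓ (g s)) t (t + h n)) atTop (𝓝 d) :=
    hd.comp hseq
  have hEq : ∀ n, slope (fun s => ℓ (g s)) t (t + h n) = ℓ (diffQuot g t (h n)) := by
    intro n
    have hc : ℓ ((h n)⁻¹ • (g (t + h n) - g t)) = (h n)⁻¹ * (ℓ (g (t + h n)) - ℓ (g t)) := by
      rw [ℓ.map_smul, map_sub, smul_eq_mul]
    simp only [slope, vsub_eq_sub, add_sub_cancel_left, diffQuot, hc, smul_eq_mul]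
  rw [funext hEq] at hA
  have hB : Tendsto (fun n => ℓ (diffQuot g t (h n))) atTop (𝓝 (ℓ x)) := by
    apply (ℓ.continuous.tendsto x).comp
    rw [tendsto_iff_dist_tendsto_zero]
    exact squeeze_zero (fun n => dist_nonneg)
      (fun n => le_of_lt (by rw [dist_comm]; exact hdist n)) hbound
  exact tendsto_nhds_unique hB hA

lemma bad_null [NormedAddCommGroup Y] [NormedSpace ℝ Y] {g : ℝ → Y}
    (hbv : BoundedVariationOn g (Icc 0 1)) (ζ : Y) (hζ : ζ ≠ 0) :
    volume {t | t ∈ Icc (0:ℝ) 1 ∧ ∃ x ∈ avgRangeN g t, ∃ y ∈ avgRangeN g t,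
      ‖(y - x) - ζ‖ < ‖ζ‖ / 2} = 0 := by
  obtain ⟨ℓ, hℓ1, hℓζ⟩ := exists_dual_vector ℝ ζ (norm_ne_zero_iff.2 hζ)
  set f : ℝ → ℝ := fun s => ℓ (g s) with hf
  have hbvf : BoundedVariationOn f (Icc 0 1) := by
    have hlip : LipschitzOnWith ‖ℓ‖₊ (fun y : Y => ℓ y) univ := ℓ.lipschitz.lipschitzOnWith
    have := hlip.comp_eVariationOn_le (mapsTo_univ g (Icc (0:ℝ) 1))
    exact ne_top_of_le_ne_top (ENNReal.mul_ne_top ENNReal.coe_ne_top hbv) this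
  have hdiff := hbvf.locallyBoundedVariationOn.ae_differentiableWithinAt_of_mem
  rw [ae_iff] at hdiff
  apply measure_mono_null ?_ hdiff
  intro t ⟨ht, x, hx, y, hy, hnear⟩
  simp only [mem_setOf_eq, not_forall]
  refine ⟨ht, fun hD => ?_⟩
  have hds := hD.hasDerivWithinAt
  have hslope := hasDerivWithinAt_iff_tendsto_slope.1 hds
  have hxd := avgRange_ell_eq hx ℓ hslope
  have hyd := avgRange_ell_eq hy ℓ hslope
  have h0 : ℓ (y - x) = 0 := by rw [map_sub, hxd, hyd, sub_self]
  have h1 : ℓ ((y - x) - ζ) = - ‖ζ‖ := by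
    rw [map_sub, h0, hℓζ, zero_sub]
    norm_num
  have h2 : |ℓ ((y - x) - ζ)| ≤ ‖(y - x) - ζ‖ := by
    calc |ℓ ((y - x) - ζ)| ≤ ‖ℓ‖ * ‖(y - x) - ζ‖ := ℓ.le_opNorm _
    _ = ‖(y - x) - ζ‖ := by rw [hℓ1, one_mul]
  rw [h1, abs_neg, abs_of_nonneg (norm_nonneg ζ)] at h2
  have hζpos : 0 < ‖ζ‖ := norm_pos_iff.2 hζ
  linarith

end Stmt13Aux

/-- A strongly absolutely continuous Banach-space valued function with
the limit average range at almost every point of `[0,1]` is differentiable almost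
everywhere on `[0,1]`. -/
theorem stmt13 {Y : Type*} [NormedAddCommGroup Y] [NormedSpace ℝ Y] [CompleteSpace Y]
    (g : ℝ → Y) (hsAC : StronglyACN g)
    (hlar : ∀ᵐ t ∂(volume : Measure ℝ), t ∈ Icc (0:ℝ) 1 → HasLimitAvgRangeN g t) :
    ∀ᵐ t ∂(volume : Measure ℝ), t ∈ Icc (0:ℝ) 1 →
      ∃ d : Y, Tendsto (fun h : ℝ => ‖diffQuot g t h - d‖) (dqFilter t) (𝓝 0) := by
  obtain ⟨η, hη, H⟩ := hsAC 1 one_pos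
  have hbv : BoundedVariationOn g (Icc 0 1) :=
    sAC_bv hη (fun {a b} ha hb hlen => evar_le_one H ha hb hlen)
  obtain ⟨c, hc, hmem⟩ := avgRange_sep (sAC_continuousOn hsAC)
  have hnull : volume {t | t ∈ Icc (0:ℝ) 1 ∧ EMetric.diam (avgRangeN g t) ≠ 0} = 0 := by
    have hsub : {t | t ∈ Icc (0:ℝ) 1 ∧ EMetric.diam (avgRangeN g t) ≠ 0} ⊆
        ⋃ ζ ∈ {ζ ∈ c | ζ ≠ 0}, {t | t ∈ Icc (0:ℝ) 1 ∧ ∃ x ∈ avgRangeN g t,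
          ∃ y ∈ avgRangeN g t, ‖(y - x) - ζ‖ < ‖ζ‖ / 2} := by
      rintro t ⟨ht, hdne⟩
      have hnle : ¬ (EMetric.diam (avgRangeN g t) ≤ 0) := by
        simpa [le_zero_iff] using hdne
      rw [show EMetric.diam (avgRangeN g t) = Metric.ediam (avgRangeN g t) from rfl,
        EMetric.diam_le_iff] at hnle
      push_neg at hnle
      obtain ⟨x, hx, y, hy, hxy⟩ := hnle
      have hxyne : x ≠ y := edist_pos.1 hxy
      have hzne : y - x ≠ 0 := sub_ne_zero_of_ne hxyne.symm
      have hznorm : 0 < ‖y - x‖ := norm_pos_iff.2 hzne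
      have hzc : y - x ∈ closure c := hmem t ht x hx y hy
      obtain ⟨ζ, hζc, hζd⟩ := Metric.mem_closure_iff.1 hzc (‖y - x‖/3) (by positivity)
      rw [dist_eq_norm] at hζd
      have htri : ‖y - x‖ ≤ ‖(y - x) - ζ‖ + ‖ζ‖ := by
        have habel : (y - x) - ζ + ζ = y - x := by abel
        calc ‖y - x‖ = ‖((y - x) - ζ) + ζ‖ := by rw [habel]
        _ ≤ ‖(y - x) - ζ‖ + ‖ζ‖ := norm_add_le _ _
      have hζpos : 0 < ‖ζ‖ := by linarith
      have hζne : ζ ≠ 0 := norm_pos_iff.1 hζpos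
      have hhalf : ‖(y - x) - ζ‖ < ‖ζ‖ / 2 := by linarith
      exact mem_biUnion ⟨hζc, hζne⟩ ⟨ht, x, hx, y, hy, hhalf⟩
    apply measure_mono_null hsub
    rw [measure_biUnion_null_iff (hc.mono (sep_subset _ _))]
    exact fun ζ hζ => bad_null hbv ζ hζ.2
  have hS : ∀ᵐ t : ℝ ∂volume, ¬(t ∈ Icc (0:ℝ) 1 ∧ EMetric.diam (avgRangeN g t) ≠ 0) := by
    rw [ae_iff]
    simpa only [not_not] using hnull
  filter_upwards [hlar, hS] with t hlim hgood ht
  have hdiam : EMetric.diam (avgRangeN g t) = 0 := by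
    by_contra hne
    exact hgood ⟨ht, hne⟩
  obtain ⟨hbdd, hconv⟩ := hlim ht
  have hne : (𝓝[{h : ℝ | h ≠ 0 ∧ t + h ∈ Icc (0:ℝ) 1}] (0:ℝ)).NeBot := by
    apply mem_closure_iff_nhdsWithin_neBot.1
    rw [Metric.mem_closure_iff]
    intro ε hε
    rcases lt_or_eq_of_le ht.2 with h1 | h1
    · have h5 : 0 < min (1 - t) ε := lt_min (by linarith) hε
      have h3 : min (1 - t) ε ≤ 1 - t := min_le_left _ _
      have h4 : min (1 - t) ε ≤ ε := min_le_right _ _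
      refine ⟨min (1 - t) ε / 2, ⟨by positivity, by linarith [ht.1], by linarith⟩, ?_⟩
      rw [Real.dist_eq, zero_sub, abs_neg, abs_of_nonneg (by positivity)]
      linarith
    · subst h1
      have h5 : 0 < min 1 ε := lt_min one_pos hε
      have h3 : min 1 ε ≤ 1 := min_le_left _ _
      have h4 : min 1 ε ≤ ε := min_le_right _ _
      refine ⟨-(min 1 ε / 2), ⟨?_, by linarith, by linarith⟩, ?_⟩
      · intro hcon
        simp only [neg_eq_zero] at hcon
        linarith
      · rw [Real.dist_eq, zero_sub, neg_neg, abs_of_nonneg (by positivity)]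
        linarith
  have hneDq : (dqFilter t).NeBot := hne
  have hcauchy : Cauchy (Filter.map (diffQuot g t) (dqFilter t)) := by
    rw [Metric.cauchy_iff]
    refine ⟨Filter.map_neBot, fun ε hε => ?_⟩
    obtain ⟨δ, hδ, hdd⟩ := hconv ε hε
    rw [hdiam, zero_add] at hdd
    refine ⟨avgSet g t δ, ?_, fun x hx y hy => ?_⟩
    · rw [Filter.mem_map]
      have hss : {h : ℝ | h ≠ 0 ∧ t + h ∈ Icc (0:ℝ) 1} ∩ Metric.ball 0 δ ⊆
          diffQuot g t ⁻¹' avgSet g t δ := by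
        rintro h ⟨⟨h1, h2⟩, h3⟩
        exact ⟨h, h1, by simpa [Real.dist_eq] using h3, h2, rfl⟩
      exact mem_of_superset (inter_mem self_mem_nhdsWithin
        (mem_nhdsWithin_of_mem_nhds (Metric.ball_mem_nhds _ hδ))) hss
    · have hle := EMetric.edist_le_diam_of_mem hx hy
      have h2 : edist x y < ENNReal.ofReal ε := lt_of_le_of_lt hle hdd
      rwa [edist_lt_ofReal] at h2
  obtain ⟨d, hd⟩ := CompleteSpace.complete hcauchy
  refine ⟨d, ?_⟩
  have htd : Tendsto (diffQuot g t) (dqFilter t) (𝓝 d) := hd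
  have hfin := (htd.sub (tendsto_const_nhds (x := d))).norm
  simpa using hfin

end
end
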